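/- arXiv:math/0404225 — 9 statements merged into one kernel-verified Lean document; each statement's English description precedes it below -/
import Mathlib

section
/- Let K be a simplicial complex on an n-element vertex set V satisfying complementarity (exactly one of each complementary pair of non-empty subsets of V is a face of K). Then the total number of faces of K is 2^(n-1) - 1, hence the Euler characteristic of K is odd. -/
open Finset

/-- `K` is an (abstract) simplicial complex: faces are nonempty finite sets,
closed under passing to nonempty subsets. -/
def IsComplex {V : Type} [DecidableEq V] (K : Finset (Finset V)) : Prop :=
  (∀ σ ∈ K, σ.Nonempty) ∧ ∀ σ ∈ K, ∀ τ ⊆ σ, τ.Nonempty → τ ∈ K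

/-- Euler characteristic of a simplicial complex. -/
def eulerChar {V : Type} [DecidableEq V] (K : Finset (Finset V)) : ℤ :=
  ∑ σ ∈ K, (-1 : ℤ) ^ (σ.card - 1)

/-- Complementarity: exactly one of each complementary pair of nonempty subsets
of the vertex set is a face. -/
def Complementarity {V : Type} [DecidableEq V] [Fintype V] (K : Finset (Finset V)) : Prop :=
  ∀ A : Finset V, A.Nonempty → Aᶜ.Nonempty → (A ∈ K ↔ Aᶜ ∉ K)

/-- A complementary simplicial complex on an `n`-element vertex set
has exactly `2^(n-1) - 1` faces; hence its Euler characteristic is odd. -/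
theorem stmt_0 {V : Type} [DecidableEq V] [Fintype V] [Nonempty V]
    (K : Finset (Finset V)) (hK : IsComplex K)
    (hvert : ∀ v : V, ({v} : Finset V) ∈ K)
    (huniv : (Finset.univ : Finset V) ∉ K)
    (hcomp : Complementarity K) :
    K.card = 2 ^ (Fintype.card V - 1) - 1 ∧ Odd (eulerChar K) := by
  classical
  set n := Fintype.card V with hn
  -- every face is nonempty with nonempty complement
  have hface : ∀ A ∈ K, A.Nonempty ∧ Aᶜ.Nonempty := by
    intro A hA
    refine ⟨hK.1 A hA, ?_⟩
    rw [Finset.nonempty_iff_ne_empty]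
    intro h
    have : A = Finset.univ := by
      rwa [Finset.compl_eq_empty_iff] at h
    exact huniv (this ▸ hA)
  set S : Finset (Finset V) :=
    Finset.univ.filter (fun A => A.Nonempty ∧ Aᶜ.Nonempty) with hS
  have hSmem : ∀ A : Finset V, A ∈ S ↔ A.Nonempty ∧ Aᶜ.Nonempty := by
    intro A; simp [hS]
  set K' : Finset (Finset V) := K.image compl with hK'
  have hK'card : K'.card = K.card :=
    Finset.card_image_of_injective _ compl_injective
  have hdisj : Disjoint K K' := by
    rw [Finset.disjoint_left]
    intro A hA hA'
    rw [hK', Finset.mem_image] at hA'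
    obtain ⟨B, hB, rfl⟩ := hA'
    obtain ⟨hB1, hB2⟩ := hface B hB
    exact ((hcomp B hB1 hB2).mp hB) hA
  have hunion : K ∪ K' = S := by
    apply Finset.Subset.antisymm
    · intro A hA
      rw [Finset.mem_union] at hA
      rw [hSmem]
      rcases hA with hA | hA
      · exact hface A hA
      · rw [hK', Finset.mem_image] at hA
        obtain ⟨B, hB, rfl⟩ := hA
        obtain ⟨hB1, hB2⟩ := hface B hB
        exact ⟨hB2, by simpa using hB1⟩
    · intro A hA
      rw [hSmem] at hA
      rw [Finset.mem_union]
      by_cases h : A ∈ K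
      · exact Or.inl h
      · right
        rw [hK', Finset.mem_image]
        refine ⟨Aᶜ, ?_, by simp⟩
        have := hcomp A hA.1 hA.2
        tauto
  have hScard : S.card = 2 ^ n - 2 := by
    have : S = Finset.univ \ {∅, (Finset.univ : Finset V)} := by
      ext A
      rw [hSmem]
      simp [Finset.nonempty_iff_ne_empty, ← Finset.compl_eq_empty_iff,
        Finset.compl_eq_empty_iff]
    rw [this, Finset.card_sdiff_of_subset (by simp)]
    have hne : (∅ : Finset V) ≠ Finset.univ := Ne.symm Finset.univ_nonempty.ne_empty
    rw [Finset.card_pair hne, Finset.card_univ, Fintype.card_finset]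
  have h2card : 2 * K.card = 2 ^ n - 2 := by
    rw [← hScard, ← hunion, Finset.card_union_of_disjoint hdisj, hK'card]
    omega
  have hn1 : 1 ≤ n := Fintype.card_pos
  have hpow : 2 ^ n = 2 * 2 ^ (n - 1) := by
    conv_lhs => rw [← Nat.sub_add_cancel hn1]
    ring
  have hcard : K.card = 2 ^ (n - 1) - 1 := by omega
  refine ⟨hcard, ?_⟩
  -- n ≥ 2
  have hn2 : 2 ≤ n := by
    by_contra h
    have : n = 1 := by omega
    obtain ⟨v, hv⟩ := Fintype.card_eq_one_iff.mp (hn ▸ this)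
    have : (Finset.univ : Finset V) = {v} := by
      ext x; simp [hv x]
    exact huniv (this ▸ hvert v)
  -- parity
  have hmod : ((eulerChar K : ZMod 2)) = (K.card : ZMod 2) := by
    rw [eulerChar]
    push_cast
    rw [Finset.sum_congr rfl (fun σ _ => by
      show ((-1 : ZMod 2)) ^ (σ.card - 1) = 1
      have : (-1 : ZMod 2) = 1 := by decide
      rw [this, one_pow])]
    simp
  rw [Int.odd_iff]
  have : ¬ (2 : ℤ) ∣ eulerChar K := by
    intro hdvd
    have h0 : ((eulerChar K : ZMod 2)) = 0 :=
      (ZMod.intCast_zmod_eq_zero_iff_dvd _ 2).mpr (by exact_mod_cast hdvd)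
    revert h0
    rw [hmod, hcard]
    have hp1 : 1 ≤ 2 ^ (n - 1) := Nat.one_le_two_pow
    have hz : (((2 : ℕ) ^ (n - 1) : ℕ) : ZMod 2) = 0 := by
      have hd : (2 : ℕ) ∣ 2 ^ (n - 1) := dvd_pow_self 2 (by omega)
      exact (ZMod.natCast_eq_zero_iff _ 2).mpr hd
    rw [Nat.cast_sub hp1, hz]
    decide
  omega
end

section
/- Let K be a simplicial complex with complementarity on an n-element vertex set where n is even. Then K has exactly 2^(n-2) faces of odd cardinality (even-dimensional faces) and 2^(n-2) - 1 faces of even cardinality (odd-dimensional faces); consequently the Euler characteristic of K equals 1. -/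
open Finset

/-!
Complementation `A ↦ Aᶜ` maps the faces of a complementary complex bijectively onto the
non-faces among the nonempty proper subsets, and preserves the parity of `A.card` when
`n` is even. So, for each parity, `K` contains exactly half of the nonempty proper subsets
of that parity: half of the `2^(n-1)` odd subsets and half of the `2^(n-1) - 2` even ones
other than `∅` and `univ`.
-/

section Parity

variable {α : Type*}

lemma sum_neg_one_pow_card (F : Finset (Finset α)) :
    ∑ σ ∈ F, (-1 : ℤ) ^ σ.card =
      #(F.filter fun σ => Even σ.card) - #(F.filter fun σ => Odd σ.card) := by
  simp only [card_filter, Nat.cast_sum, Nat.cast_ite, Nat.cast_one, Nat.cast_zero,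
    ← sum_sub_distrib]
  refine sum_congr rfl fun σ _ => ?_
  rcases Nat.even_or_odd σ.card with h | h
  · simp [h, h.neg_one_pow, Nat.not_odd_iff_even.2 h]
  · simp [h, h.neg_one_pow, Nat.not_even_iff_odd.2 h]

lemma card_filter_even_card_add_card_filter_odd_card (F : Finset (Finset α)) :
    #(F.filter fun σ => Even σ.card) + #(F.filter fun σ => Odd σ.card) = #F := by
  simpa only [Nat.not_even_iff_odd] using card_filter_add_card_filter_not (s := F)
    (fun σ => Even σ.card)

variable [Fintype α] [Nonempty α]

lemma card_filter_even_card_univ_eq_card_filter_odd_card_univ :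
    #(univ.filter fun A : Finset α => Even A.card) =
      #(univ.filter fun A : Finset α => Odd A.card) := by
  have h := sum_powerset_neg_one_pow_card_of_nonempty (univ_nonempty (α := α))
  rw [powerset_univ, sum_neg_one_pow_card] at h
  omega

lemma card_filter_odd_card_univ :
    #(univ.filter fun A : Finset α => Odd A.card) = 2 ^ (Fintype.card α - 1) := by
  have htot := card_filter_even_card_add_card_filter_odd_card (univ : Finset (Finset α))
  rw [card_filter_even_card_univ_eq_card_filter_odd_card_univ, card_univ,
    Fintype.card_finset, ← Nat.two_pow_pred_add_two_pow_pred Fintype.card_pos] at htot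
  omega

lemma card_filter_even_card_univ :
    #(univ.filter fun A : Finset α => Even A.card) = 2 ^ (Fintype.card α - 1) := by
  rw [card_filter_even_card_univ_eq_card_filter_odd_card_univ, card_filter_odd_card_univ]

end Parity

def nonemptyProperSubsets (V : Type) [DecidableEq V] [Fintype V] : Finset (Finset V) :=
  univ.filter fun A => A.Nonempty ∧ Aᶜ.Nonempty

section Complementarity

variable {V : Type} [DecidableEq V] [Fintype V]

lemma nonempty_compl_iff_ne_univ {A : Finset V} : Aᶜ.Nonempty ↔ A ≠ univ := by
  rw [nonempty_iff_ne_empty, Ne, compl_eq_empty_iff]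

lemma even_card_compl_iff (hn : Even (Fintype.card V)) (A : Finset V) :
    Even Aᶜ.card ↔ Even A.card := by
  rw [card_compl, Nat.even_sub (card_le_univ A)]
  tauto

lemma odd_card_compl_iff (hn : Even (Fintype.card V)) (A : Finset V) :
    Odd Aᶜ.card ↔ Odd A.card := by
  simp only [← Nat.not_even_iff_odd, even_card_compl_iff hn]

lemma card_filter_odd_card_nonemptyProperSubsets [Nonempty V] (hn : Even (Fintype.card V)) :
    #((nonemptyProperSubsets V).filter fun A => Odd A.card) = 2 ^ (Fintype.card V - 1) := by
  rw [← card_filter_odd_card_univ]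
  congr 1
  ext A
  simp only [nonemptyProperSubsets, mem_filter, mem_univ, true_and]
  exact ⟨fun h => h.2, fun h =>
    ⟨⟨card_pos.1 h.pos, card_pos.1 ((odd_card_compl_iff hn A).2 h).pos⟩, h⟩⟩

lemma card_filter_even_card_nonemptyProperSubsets [Nonempty V] (hn : Even (Fintype.card V)) :
    #((nonemptyProperSubsets V).filter fun A => Even A.card) + 2 = 2 ^ (Fintype.card V - 1) := by
  rw [← card_filter_even_card_univ]
  set E := univ.filter fun A : Finset V => Even A.card
  have hproper : (nonemptyProperSubsets V).filter (fun A => Even A.card) =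
      (E.erase ∅).erase univ := by
    ext A
    simp only [nonemptyProperSubsets, E, mem_filter, mem_erase, mem_univ, true_and,
      nonempty_iff_ne_empty, Ne, compl_eq_empty_iff]
    tauto
  have hempty := card_erase_add_one (s := E) (a := ∅) (by simp [E])
  have huniv := card_erase_add_one (s := E.erase ∅) (a := univ)
    (by simpa [E] using ⟨univ_nonempty.ne_empty, hn⟩)
  rw [hproper]
  omega

lemma two_mul_card_filter_of_complementarity {K : Finset (Finset V)}
    (hne : ∀ σ ∈ K, σ.Nonempty) (huniv : univ ∉ K) (hcomp : Complementarity K)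
    (P : Finset V → Prop) [DecidablePred P] (hP : ∀ A, P Aᶜ ↔ P A) :
    2 * #(K.filter P) = #((nonemptyProperSubsets V).filter P) := by
  set T := (nonemptyProperSubsets V).filter P
  have hfaces : T.filter (· ∈ K) = K.filter P := by
    ext A
    simp only [T, nonemptyProperSubsets, mem_filter, mem_univ, true_and]
    constructor
    · rintro ⟨⟨-, hPA⟩, hA⟩
      exact ⟨hA, hPA⟩
    · rintro ⟨hA, hPA⟩
      exact ⟨⟨⟨hne A hA, nonempty_compl_iff_ne_univ.2 fun h => huniv (h ▸ hA)⟩, hPA⟩, hA⟩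
  have hnonfaces : T.filter (· ∉ K) = (K.filter P).image compl := by
    ext A
    simp only [T, nonemptyProperSubsets, mem_filter, mem_univ, true_and, mem_image]
    constructor
    · rintro ⟨⟨⟨hA, hAc⟩, hPA⟩, hAK⟩
      refine ⟨Aᶜ, ⟨?_, (hP A).2 hPA⟩, compl_compl A⟩
      rwa [hcomp Aᶜ hAc (by rwa [compl_compl]), compl_compl]
    · rintro ⟨B, ⟨hB, hPB⟩, rfl⟩
      have hBc : Bᶜ.Nonempty := nonempty_compl_iff_ne_univ.2 fun h => huniv (h ▸ hB)
      refine ⟨⟨⟨hBc, ?_⟩, (hP B).2 hPB⟩, (hcomp B (hne B hB) hBc).1 hB⟩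
      rw [compl_compl]
      exact hne B hB
  rw [← card_filter_add_card_filter_not (s := T) (· ∈ K), hfaces, hnonfaces,
    card_image_of_injective _ compl_injective]
  ring

end Complementarity

lemma eulerChar_eq_card_odd_sub_card_even {V : Type} [DecidableEq V] {K : Finset (Finset V)}
    (hne : ∀ σ ∈ K, σ.Nonempty) :
    eulerChar K = #(K.filter fun σ => Odd σ.card) - #(K.filter fun σ => Even σ.card) := by
  have hflip : eulerChar K = -∑ σ ∈ K, (-1 : ℤ) ^ σ.card := by
    rw [eulerChar, ← sum_neg_distrib]
    refine sum_congr rfl fun σ hσ => ?_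
    conv_rhs => rw [← Nat.sub_add_cancel (card_pos.2 (hne σ hσ)), pow_succ]
    ring
  rw [hflip, sum_neg_one_pow_card]
  ring

theorem stmt_1_general {V : Type} [DecidableEq V] [Fintype V] [Nonempty V]
    (hn : Even (Fintype.card V))
    (K : Finset (Finset V)) (hK : IsComplex K)
    (huniv : (Finset.univ : Finset V) ∉ K)
    (hcomp : Complementarity K) :
    (K.filter fun σ => Odd σ.card).card = 2 ^ (Fintype.card V - 2) ∧
    (K.filter fun σ => Even σ.card).card = 2 ^ (Fintype.card V - 2) - 1 ∧
    eulerChar K = 1 := by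
  have hodd := two_mul_card_filter_of_complementarity hK.1 huniv hcomp
    (fun A => Odd A.card) (odd_card_compl_iff hn)
  have heven := two_mul_card_filter_of_complementarity hK.1 huniv hcomp
    (fun A => Even A.card) (even_card_compl_iff hn)
  have hodd_subsets := card_filter_odd_card_nonemptyProperSubsets hn
  have heven_subsets := card_filter_even_card_nonemptyProperSubsets hn
  have hhalf : 2 ^ (Fintype.card V - 1) = 2 * 2 ^ (Fintype.card V - 2) := by
    obtain ⟨k, hk⟩ := hn
    have := Fintype.card_pos (α := V)
    rw [← pow_succ']
    congr 1
    omega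
  have hodd_faces : #(K.filter fun σ => Odd σ.card) = 2 ^ (Fintype.card V - 2) := by omega
  have heven_faces : #(K.filter fun σ => Even σ.card) = 2 ^ (Fintype.card V - 2) - 1 := by
    omega
  refine ⟨hodd_faces, heven_faces, ?_⟩
  rw [eulerChar_eq_card_odd_sub_card_even hK.1, hodd_faces, heven_faces,
    Nat.cast_sub Nat.one_le_two_pow]
  push_cast
  ring

/-- A complementary simplicial complex on an even number `n` of vertices
has `2^(n-2)` faces of odd cardinality and `2^(n-2) - 1` faces of even cardinality;
consequently its Euler characteristic equals `1`. -/
theorem stmt_1 {V : Type} [DecidableEq V] [Fintype V] [Nonempty V]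
    (hn : Even (Fintype.card V))
    (K : Finset (Finset V)) (hK : IsComplex K)
    (hvert : ∀ v : V, ({v} : Finset V) ∈ K)
    (huniv : (Finset.univ : Finset V) ∉ K)
    (hcomp : Complementarity K) :
    (K.filter fun σ => Odd σ.card).card = 2 ^ (Fintype.card V - 2) ∧
    (K.filter fun σ => Even σ.card).card = 2 ^ (Fintype.card V - 2) - 1 ∧
    eulerChar K = 1 :=
  stmt_1_general hn K hK huniv hcomp
end

section
/- Let N be a 2-dimensional simplicial complex on a vertex set of at most 5 vertices such that each edge of N is contained in at least two triangles of N. Then N contains a combinatorial 2-sphere as a subcomplex: either the boundary of a tetrahedron S^2_4 on some 4-subset of vertices, or (when N has 5 vertices) a join S^0_2(V_1) * S^1_3(V_2) for some partition of the vertex set into sets V_1, V_2 of sizes 2 and 3. -/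
open Finset

/-! ### Auxiliary decidable core on `Fin 5` -/

def tlist : List (Finset (Fin 5)) :=
  [{0,1,2},{0,1,3},{0,1,4},{0,2,3},{0,2,4},{0,3,4},{1,2,3},{1,2,4},{1,3,4},{2,3,4}]

def edgesL : List (Finset (Fin 5)) :=
  [{0,1},{0,2},{0,3},{0,4},{1,2},{1,3},{1,4},{2,3},{2,4},{3,4}]

def wlistL : List (Finset (Fin 5)) := [{0,1,2,3},{0,1,2,4},{0,1,3,4},{0,2,3,4},{1,2,3,4}]

def pairsL : List (Finset (Fin 5) × Finset (Fin 5)) :=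
  [({0,1},{2,3,4}),({0,2},{1,3,4}),({0,3},{1,2,4}),({0,4},{1,2,3}),({1,2},{0,3,4}),
   ({1,3},{0,2,4}),({1,4},{0,2,3}),({2,3},{0,1,4}),({2,4},{0,1,3}),({3,4},{0,1,2})]

def mset (I : Finset (Fin 10)) : Finset (Finset (Fin 5)) :=
  I.image (fun i => tlist.getD i.val ∅)

def chkB (I : Finset (Fin 10)) : Bool :=
  decide (I = ∅) ||
  !(edgesL.all fun e => ((mset I).filter (fun t => e ⊆ t)).card == 0 ||
      Nat.ble 2 ((mset I).filter (fun t => e ⊆ t)).card) ||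
  wlistL.any (fun W => decide (∀ s ∈ tlist, s ⊆ W → s ∈ mset I)) ||
  pairsL.any (fun q => decide (∀ a ∈ q.1, ∀ p ∈ edgesL, p ⊆ q.2 → insert a p ∈ mset I))

def dec (m : ℕ) : Finset (Fin 10) := univ.filter (fun i => Nat.testBit m i.val)

lemma dec_surj : ∀ I : Finset (Fin 10), ∃ m < 1024, dec m = I := by
  intro I
  induction I using Finset.induction_on with
  | empty => exact ⟨0, by norm_num, by ext i; simp [dec]⟩
  | @insert a I ha ih =>
    obtain ⟨m, hm, rfl⟩ := ih
    refine ⟨m ||| 2^(a : ℕ), ?_, ?_⟩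
    · have h1 : (2:ℕ)^(a:ℕ) < 2^10 := Nat.pow_lt_pow_right (by norm_num) a.isLt
      exact Nat.or_lt_two_pow hm h1
    · ext i
      simp only [dec, mem_filter, mem_univ, true_and, Nat.testBit_lor, Nat.testBit_two_pow,
        mem_insert, Bool.or_eq_true, decide_eq_true_eq, Fin.ext_iff]
      tauto

set_option maxRecDepth 40000 in
set_option maxHeartbeats 4000000 in
lemma keyB' : (List.range 1024).all (fun m => chkB (dec m)) = true := by decide

lemma keyB : ∀ I : Finset (Fin 10), chkB I = true := by
  intro I
  obtain ⟨m, hm, rfl⟩ := dec_surj I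
  simpa using List.all_eq_true.mp keyB' m (List.mem_range.mpr hm)

set_option maxRecDepth 4000 in
lemma cover3 : ∀ s : Finset (Fin 5), s.card = 3 → s ∈ tlist := by decide

set_option maxRecDepth 4000 in
lemma cover2 : ∀ p : Finset (Fin 5), p.card = 2 → p ∈ edgesL := by decide

lemma w4 : ∀ W ∈ wlistL, W.card = 4 := by decide

set_option maxRecDepth 4000 in
lemma edges2 : ∀ e ∈ edgesL, e.card = 2 := by decide

set_option maxRecDepth 2000 in
lemma pairsFacts : ∀ q ∈ pairsL, q.1.card = 2 ∧ q.2.card = 3 ∧ q.1 ∩ q.2 = ∅ := by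
  intro q hq
  fin_cases hq <;> refine ⟨by decide, by decide, by decide⟩

set_option maxRecDepth 4000 in
lemma idxOf : ∀ t ∈ tlist, ∃ i : Fin 10, tlist.getD i.val ∅ = t := by decide

lemma keyP (I : Finset (Fin 10)) (hne : I ≠ ∅)
    (h : ∀ e : Finset (Fin 5), e.card = 2 → ((mset I).filter (fun t => e ⊆ t)) ≠ ∅ →
      2 ≤ ((mset I).filter (fun t => e ⊆ t)).card) :
    (∃ W : Finset (Fin 5), W.card = 4 ∧ ∀ s ⊆ W, s.card = 3 → s ∈ mset I) ∨
    (∃ V₁ V₂ : Finset (Fin 5), V₁.card = 2 ∧ V₂.card = 3 ∧ Disjoint V₁ V₂ ∧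
      ∀ a ∈ V₁, ∀ p ⊆ V₂, p.card = 2 → insert a p ∈ mset I) := by
  have hb := keyB I
  unfold chkB at hb
  simp only [Bool.or_eq_true, decide_eq_true_eq, List.any_eq_true, Bool.not_eq_true',
    List.all_eq_false] at hb
  rcases hb with ((h1 | h2) | h3) | h4
  · exact absurd h1 hne
  · exfalso
    obtain ⟨e, he, hfalse⟩ := h2
    have hec : e.card = 2 := edges2 e he
    simp only [Bool.or_eq_true, beq_iff_eq, Nat.ble_eq, not_or, not_le] at hfalse
    obtain ⟨hc0, hc2⟩ := hfalse
    have hne' : ((mset I).filter (fun t => e ⊆ t)) ≠ ∅ := by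
      intro hcon
      exact hc0 (by rw [hcon]; simp)
    have := h e hec hne'
    omega
  · left
    obtain ⟨W, hW, hall⟩ := h3
    exact ⟨W, w4 W hW, fun s hs h3c => hall s (cover3 s h3c) hs⟩
  · right
    obtain ⟨q, hq, hall⟩ := h4
    obtain ⟨c2, c3, cd⟩ := pairsFacts q hq
    exact ⟨q.1, q.2, c2, c3, disjoint_iff_inter_eq_empty.mpr cd,
      fun a ha p hp hpc => hall a ha p (cover2 p hpc) hp⟩

lemma keyT (T : Finset (Finset (Fin 5))) (h3 : ∀ t ∈ T, t.card = 3) (hne : T.Nonempty)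
    (h : ∀ e : Finset (Fin 5), e.card = 2 → (T.filter (fun t => e ⊆ t)) ≠ ∅ →
      2 ≤ (T.filter (fun t => e ⊆ t)).card) :
    (∃ W : Finset (Fin 5), W.card = 4 ∧ ∀ s ⊆ W, s.card = 3 → s ∈ T) ∨
    (∃ V₁ V₂ : Finset (Fin 5), V₁.card = 2 ∧ V₂.card = 3 ∧ Disjoint V₁ V₂ ∧
      ∀ a ∈ V₁, ∀ p ⊆ V₂, p.card = 2 → insert a p ∈ T) := by
  set I : Finset (Fin 10) := univ.filter (fun i : Fin 10 => tlist.getD i.val ∅ ∈ T) with hI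
  have hTm : mset I = T := by
    ext t
    simp only [mset, mem_image, hI, mem_filter, mem_univ, true_and]
    constructor
    · rintro ⟨i, hi, rfl⟩; exact hi
    · intro ht
      obtain ⟨i, hi⟩ := idxOf t (cover3 t (h3 t ht))
      exact ⟨i, hi ▸ ht, hi⟩
  have hIne : I ≠ ∅ := by
    intro hcon
    obtain ⟨t, ht⟩ := hne
    rw [← hTm, hcon] at ht
    simp only [mset, image_empty, notMem_empty] at ht
  rw [← hTm]
  exact keyP I hIne (by rw [hTm]; exact h)

/-- Lemma 3.2: a 2-dimensional simplicial complex on at most 5 vertices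
in which every edge lies in at least two triangles contains a combinatorial 2-sphere
as a subcomplex: either a standard sphere `S²₄(W)` on a 4-set `W`, or a join
`S⁰₂(V₁) ∗ S¹₃(V₂)` for disjoint sets `V₁, V₂` of sizes 2 and 3. -/
theorem stmt_3 {V : Type} [DecidableEq V] [Fintype V] (hV : Fintype.card V ≤ 5)
    (N : Finset (Finset V)) (hN : IsComplex N)
    (hdim : ∀ σ ∈ N, σ.card ≤ 3) (hdim2 : ∃ σ ∈ N, σ.card = 3)
    (hedge : ∀ e ∈ N, e.card = 2 → 2 ≤ (N.filter fun t => t.card = 3 ∧ e ⊆ t).card) :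
    (∃ W : Finset V, W.card = 4 ∧ ∀ s ⊆ W, s.Nonempty → s ≠ W → s ∈ N) ∨
    (∃ V₁ V₂ : Finset V, V₁.card = 2 ∧ V₂.card = 3 ∧ Disjoint V₁ V₂ ∧
      ∀ s ⊆ V₁ ∪ V₂, s.Nonempty → ¬ V₁ ⊆ s → ¬ V₂ ⊆ s → s ∈ N) := by
  obtain ⟨f⟩ : Nonempty (V ↪ Fin 5) :=
    Function.Embedding.nonempty_of_card_le (by simpa using hV)
  have hinj : Function.Injective (Finset.image f) := Finset.image_injective f.injective
  set T : Finset (Finset (Fin 5)) := (N.filter (fun t => t.card = 3)).image (fun t => t.image f)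
    with hTdef
  -- membership characterization
  have hmemT : ∀ u, u ∈ T ↔ ∃ t ∈ N, t.card = 3 ∧ t.image f = u := by
    intro u
    simp only [hTdef, mem_image, mem_filter]
    constructor
    · rintro ⟨t, ⟨ht, hc⟩, rfl⟩; exact ⟨t, ht, hc, rfl⟩
    · rintro ⟨t, ht, hc, rfl⟩; exact ⟨t, ⟨ht, hc⟩, rfl⟩
  have hback : ∀ (s : Finset V), s.image f ∈ T → s.card = 3 → s ∈ N := by
    intro s hs hc
    obtain ⟨t, ht, _, hts⟩ := (hmemT _).mp hs
    rwa [hinj hts] at ht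
  have h3T : ∀ u ∈ T, u.card = 3 := by
    intro u hu
    obtain ⟨t, _, hc, rfl⟩ := (hmemT u).mp hu
    rw [Finset.card_image_of_injective _ f.injective]; exact hc
  have hneT : T.Nonempty := by
    obtain ⟨t, ht, hc⟩ := hdim2
    exact ⟨t.image f, (hmemT _).mpr ⟨t, ht, hc, rfl⟩⟩
  have hedgeT : ∀ e : Finset (Fin 5), e.card = 2 → (T.filter (fun t => e ⊆ t)) ≠ ∅ →
      2 ≤ (T.filter (fun t => e ⊆ t)).card := by
    intro e hec hfne
    obtain ⟨u, hu⟩ := Finset.nonempty_of_ne_empty hfne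
    rw [mem_filter] at hu
    obtain ⟨t, htN, htc, htu⟩ := (hmemT u).mp hu.1
    set e₀ : Finset V := t.filter (fun v => f v ∈ e) with he₀
    have hsub : e ⊆ t.image f := htu ▸ hu.2
    have hime : e₀.image f = e := by
      apply Finset.Subset.antisymm
      · intro x hx
        simp only [mem_image, he₀, mem_filter] at hx
        obtain ⟨v, ⟨_, hv⟩, rfl⟩ := hx
        exact hv
      · intro x hx
        have hx' := hsub hx
        simp only [mem_image] at hx' ⊢
        obtain ⟨v, hv, rfl⟩ := hx'
        exact ⟨v, by simp [he₀, mem_filter, hv, hx], rfl⟩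
    have he₀c : e₀.card = 2 := by
      rw [← hec, ← hime, Finset.card_image_of_injective _ f.injective]
    have he₀N : e₀ ∈ N :=
      hN.2 t htN e₀ (Finset.filter_subset _ _) (Finset.card_pos.mp (by omega))
    have h2 := hedge e₀ he₀N he₀c
    set S := N.filter (fun t' => t'.card = 3 ∧ e₀ ⊆ t') with hS
    have hmap : S.image (fun t' => t'.image f) ⊆ T.filter (fun u => e ⊆ u) := by
      intro u hu'
      simp only [mem_image, hS, mem_filter] at hu'
      obtain ⟨t', ⟨ht'N, ht'c, ht'e⟩, rfl⟩ := hu'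
      rw [mem_filter]
      refine ⟨(hmemT _).mpr ⟨t', ht'N, ht'c, rfl⟩, ?_⟩
      rw [← hime]
      exact Finset.image_subset_image ht'e
    calc 2 ≤ S.card := h2
      _ = (S.image (fun t' => t'.image f)).card :=
          (Finset.card_image_of_injective _ hinj).symm
      _ ≤ (T.filter (fun u => e ⊆ u)).card := Finset.card_le_card hmap
  -- pulling back subsets of the range
  rcases keyT T h3T hneT hedgeT with ⟨W', hW'c, hW'⟩ | ⟨V₁', V₂', hc1, hc2, hdisj, hjoin⟩
  · -- tetrahedron case
    left
    have hWrange : ∀ x ∈ W', ∃ v : V, f v = x := by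
      intro x hx
      obtain ⟨z, hz, hzx⟩ := Finset.exists_mem_ne (s := W') (by omega) x
      have hsub3 : (W'.erase z) ⊆ W' := Finset.erase_subset _ _
      have hc3 : (W'.erase z).card = 3 := by rw [Finset.card_erase_of_mem hz, hW'c]
      have hmem : x ∈ W'.erase z := Finset.mem_erase.mpr ⟨fun hxz => hzx (hxz ▸ rfl), hx⟩
      obtain ⟨t, _, _, heq⟩ := (hmemT _).mp (hW' _ hsub3 hc3)
      rw [← heq] at hmem
      obtain ⟨v, _, rfl⟩ := Finset.mem_image.mp hmem
      exact ⟨v, rfl⟩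
    set W : Finset V := univ.filter (fun v => f v ∈ W') with hWdef
    have hWim : W.image f = W' := by
      apply Finset.Subset.antisymm
      · intro x hx
        simp only [mem_image, hWdef, mem_filter, mem_univ, true_and] at hx
        obtain ⟨v, hv, rfl⟩ := hx
        exact hv
      · intro x hx
        obtain ⟨v, rfl⟩ := hWrange x hx
        exact Finset.mem_image.mpr ⟨v, by simp [hWdef, hx], rfl⟩
    have hWc : W.card = 4 := by
      rw [← hW'c, ← hWim, Finset.card_image_of_injective _ f.injective]
    refine ⟨W, hWc, ?_⟩
    have hW3 : ∀ s ⊆ W, s.card = 3 → s ∈ N := by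
      intro s hsW hsc
      apply hback s _ hsc
      apply hW'
      · rw [← hWim]; exact Finset.image_subset_image hsW
      · rw [Finset.card_image_of_injective _ f.injective]; exact hsc
    intro s hsW hsne hsneq
    have hsc : s.card ≤ 3 := by
      have hle : s.card ≤ 4 := hWc ▸ Finset.card_le_card hsW
      rcases Nat.lt_or_ge s.card 4 with h | h
      · omega
      · exact absurd (Finset.eq_of_subset_of_card_le hsW (by omega)) hsneq
    obtain ⟨u, hsu, huW, huc⟩ :=
      Finset.exists_subsuperset_card_eq hsW hsc (by omega)
    exact hN.2 u (hW3 u huW huc) s hsu hsne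
  · -- join case
    right
    have hneV₁ : V₁'.Nonempty := Finset.card_pos.mp (by omega)
    have htri : ∀ a ∈ V₁', ∀ p ⊆ V₂', p.card = 2 → insert a p ∈ T := hjoin
    have hrange : ∀ x, (x ∈ V₁' ∨ x ∈ V₂') → ∃ v : V, f v = x := by
      intro x hx
      rcases hx with hx | hx
      · obtain ⟨p, hpV, hpc⟩ := Finset.exists_subset_card_eq (show 2 ≤ V₂'.card by omega)
        obtain ⟨t, _, _, heq⟩ := (hmemT _).mp (htri x hx p hpV hpc)
        have hxmem : x ∈ insert x p := Finset.mem_insert_self x p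
        rw [← heq] at hxmem
        obtain ⟨v, _, rfl⟩ := Finset.mem_image.mp hxmem
        exact ⟨v, rfl⟩
      · obtain ⟨a, ha⟩ := hneV₁
        obtain ⟨z, hz, hzx⟩ := Finset.exists_mem_ne (s := V₂') (by omega) x
        have hpc : (V₂'.erase z).card = 2 := by rw [Finset.card_erase_of_mem hz, hc2]
        have := htri a ha _ (Finset.erase_subset _ _) hpc
        obtain ⟨t, _, _, heq⟩ := (hmemT _).mp this
        have hxmem : x ∈ insert a (V₂'.erase z) :=
          Finset.mem_insert_of_mem (Finset.mem_erase.mpr ⟨fun h' => hzx (h' ▸ rfl), hx⟩)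
        rw [← heq] at hxmem
        obtain ⟨v, _, rfl⟩ := Finset.mem_image.mp hxmem
        exact ⟨v, rfl⟩
    set V₁ : Finset V := univ.filter (fun v => f v ∈ V₁') with hV₁def
    set V₂ : Finset V := univ.filter (fun v => f v ∈ V₂') with hV₂def
    have hV₁im : V₁.image f = V₁' := by
      apply Finset.Subset.antisymm
      · intro x hx
        simp only [mem_image, hV₁def, mem_filter, mem_univ, true_and] at hx
        obtain ⟨v, hv, rfl⟩ := hx
        exact hv
      · intro x hx
        obtain ⟨v, rfl⟩ := hrange x (Or.inl hx)
        exact Finset.mem_image.mpr ⟨v, by simp [hV₁def, hx], rfl⟩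
    have hV₂im : V₂.image f = V₂' := by
      apply Finset.Subset.antisymm
      · intro x hx
        simp only [mem_image, hV₂def, mem_filter, mem_univ, true_and] at hx
        obtain ⟨v, hv, rfl⟩ := hx
        exact hv
      · intro x hx
        obtain ⟨v, rfl⟩ := hrange x (Or.inr hx)
        exact Finset.mem_image.mpr ⟨v, by simp [hV₂def, hx], rfl⟩
    have hV₁c : V₁.card = 2 := by
      rw [← hc1, ← hV₁im, Finset.card_image_of_injective _ f.injective]
    have hV₂c : V₂.card = 3 := by
      rw [← hc2, ← hV₂im, Finset.card_image_of_injective _ f.injective]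
    have hdisj' : Disjoint V₁ V₂ := by
      rw [Finset.disjoint_left]
      intro v hv1 hv2
      simp only [hV₁def, hV₂def, mem_filter, mem_univ, true_and] at hv1 hv2
      exact (Finset.disjoint_left.mp hdisj) hv1 hv2
    have htriN : ∀ a ∈ V₁, ∀ p ⊆ V₂, p.card = 2 → insert a p ∈ N := by
      intro a ha p hpV hpc
      have haV : f a ∈ V₁' := by
        simpa [hV₁def] using ha
      have hpV' : p.image f ⊆ V₂' := hV₂im ▸ Finset.image_subset_image hpV
      have hpc' : (p.image f).card = 2 := by
        rw [Finset.card_image_of_injective _ f.injective]; exact hpc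
      have hT := htri (f a) haV (p.image f) hpV' hpc'
      have : (insert a p).image f = insert (f a) (p.image f) := Finset.image_insert _ _ _
      rw [← this] at hT
      apply hback _ hT
      have hap : a ∉ p := fun hap =>
        Finset.disjoint_left.mp hdisj' ha (hpV hap)
      rw [Finset.card_insert_of_notMem hap, hpc]
    refine ⟨V₁, V₂, hV₁c, hV₂c, hdisj', ?_⟩
    intro s hs hsne hns1 hns2
    have hs1 : (s ∩ V₁) ⊂ V₁ := by
      refine Finset.ssubset_iff_subset_ne.mpr ⟨Finset.inter_subset_right, fun h' => hns1 ?_⟩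
      rw [← h']; exact Finset.inter_subset_left
    have hs2 : (s ∩ V₂) ⊂ V₂ := by
      refine Finset.ssubset_iff_subset_ne.mpr ⟨Finset.inter_subset_right, fun h' => hns2 ?_⟩
      rw [← h']; exact Finset.inter_subset_left
    have hc1' : (s ∩ V₁).card ≤ 1 := by
      have := Finset.card_lt_card hs1; omega
    have hc2' : (s ∩ V₂).card ≤ 2 := by
      have := Finset.card_lt_card hs2; omega
    obtain ⟨a, haV₁, hsa⟩ : ∃ a ∈ V₁, (s ∩ V₁) ⊆ {a} := by
      rcases (s ∩ V₁).eq_empty_or_nonempty with h' | ⟨a, ha⟩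
      · obtain ⟨a, ha⟩ := Finset.card_pos.mp (show 0 < V₁.card by omega)
        exact ⟨a, ha, h' ▸ Finset.empty_subset _⟩
      · refine ⟨a, Finset.inter_subset_right ha, fun b hb => Finset.mem_singleton.mpr ?_⟩
        exact Finset.card_le_one.mp hc1' b hb a ha
    obtain ⟨p, hsp, hpV₂, hpc⟩ :=
      Finset.exists_subsuperset_card_eq Finset.inter_subset_right hc2'
        (show 2 ≤ V₂.card by omega)
    have hsub : s ⊆ insert a p := by
      intro x hx
      rcases Finset.mem_union.mp (hs hx) with h' | h'
      · have : x ∈ s ∩ V₁ := Finset.mem_inter.mpr ⟨hx, h'⟩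
        exact Finset.mem_insert.mpr (Or.inl (Finset.mem_singleton.mp (hsa this)))
      · have : x ∈ s ∩ V₂ := Finset.mem_inter.mpr ⟨hx, h'⟩
        exact Finset.mem_insert_of_mem (hsp this)
    exact hN.2 _ (htriN a haV₁ p hpV₂ hpc) s hsub hsne
end

section
/- In the proof of Lemma 3.2: Let N be a 2-dimensional simplicial complex on a 5-element vertex set V such that every edge is contained in at least two triangles. Define x ~ y if and only if V \ {x,y} is not a triangle (face) of N (for x ≠ y), together with x ~ x. Then ~ is an equivalence relation on V. -/
open Finset

/-- from the proof of Lemma 3.2: for a simplicial complex `N` on a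
5-element vertex set `V`, with faces of at most 3 elements and every edge in at
least two triangles, the relation `x ~ y ↔ (x = y ∨ V \ {x,y} is not a triangle of N)`
is an equivalence relation on `V`. -/
theorem stmt_4 {V : Type} [DecidableEq V] [Fintype V] (hV : Fintype.card V = 5)
    (N : Finset (Finset V)) (hN : IsComplex N)
    (hdim : ∀ σ ∈ N, σ.card ≤ 3)
    (hedge : ∀ e ∈ N, e.card = 2 → 2 ≤ (N.filter fun t => t.card = 3 ∧ e ⊆ t).card) :
    Equivalence (fun x y : V => x = y ∨ (Finset.univ \ ({x, y} : Finset V)) ∉ N) := by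
  constructor
  · intro x; left; rfl
  · intro x y h
    rcases h with h | h
    · left; exact h.symm
    · right; rwa [pair_comm]
  · intro x y z hxy hyz
    rcases hxy with rfl | hxy
    · exact hyz
    rcases hyz with rfl | hyz
    · right; exact hxy
    by_contra hcon
    push_neg at hcon
    obtain ⟨hxz, hT⟩ := hcon
    have hxyne : x ≠ y := by rintro rfl; exact hyz hT
    have hyzne : y ≠ z := by rintro rfl; exact hxy hT
    set e : Finset V := univ \ {x, y, z} with he
    have hcard3 : ({x, y, z} : Finset V).card = 3 := by
      rw [card_insert_of_notMem (by simp [hxyne, hxz]),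
        card_insert_of_notMem (by simp [hyzne])]
      simp
    have hce : e.card = 2 := by
      rw [he, card_sdiff_of_subset (subset_univ _), card_univ, hV, hcard3]
    have heT : e ⊆ univ \ {x, z} := by
      apply sdiff_subset_sdiff (le_refl _)
      intro a ha
      simp only [mem_insert, mem_singleton] at ha ⊢
      tauto
    have heN : e ∈ N := hN.2 _ hT _ heT (by rw [← card_pos, hce]; norm_num)
    have hkey := hedge e heN hce
    have hsub : (N.filter fun t => t.card = 3 ∧ e ⊆ t) ⊆ {univ \ {x, z}} := by
      intro t ht
      simp only [mem_filter] at ht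
      obtain ⟨htN, ht3, het⟩ := ht
      have hne : e ≠ t := by intro h; rw [← h, hce] at ht3; omega
      obtain ⟨v, hvt, hve⟩ := exists_of_ssubset (het.ssubset_of_ne hne)
      have hvmem : v ∈ ({x, y, z} : Finset V) := by
        by_contra h; exact hve (by simp [he, h])
      have hteq : t = insert v e := by
        apply (Finset.eq_of_subset_of_card_le (insert_subset hvt het) ?_).symm
        rw [card_insert_of_notMem hve, hce, ht3]
      have key : ∀ a b c : V, a ≠ b → a ≠ c → ({a, b, c} : Finset V) = {x, y, z} →
          insert a (univ \ {x, y, z}) = univ \ {b, c} := by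
        intro a b c hab hac habc
        ext w
        simp only [← habc, mem_insert, mem_sdiff, mem_univ, true_and, mem_singleton,
          not_or]
        constructor
        · rintro (rfl | ⟨h1, h2, h3⟩) <;> exact ⟨by tauto, by tauto⟩
        · rintro ⟨h1, h2⟩
          by_cases hwa : w = a
          · left; exact hwa
          · right; exact ⟨hwa, h1, h2⟩
      simp only [mem_insert, mem_singleton] at hvmem
      rcases hvmem with rfl | rfl | rfl
      · exfalso
        apply hyz
        rwa [hteq, he, key v y z hxyne hxz rfl] at htN
      · rw [mem_singleton, hteq, he, key v x z (Ne.symm hxyne) hyzne]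
        ext w; simp only [mem_insert, mem_singleton]; tauto
      · exfalso
        apply hxy
        rwa [hteq, he, key v x y (Ne.symm hxz) (Ne.symm hyzne)
          (by ext w; simp only [mem_insert, mem_singleton]; tauto)] at htN
    have := card_le_card hsub
    simp only [card_singleton] at this
    omega
end

section
/- Let M be a 12-vertex 6-dimensional weak pseudomanifold with complementarity, and let A be a 4-element face of M whose link is the standard 2-sphere S^2_4(B) on a 4-set B. Let C be the set of the remaining 4 vertices. Then the link of C in M is the standard 2-sphere S^2_4(A) on A, and the link of B is S^2_4(C); i.e., {A, B, C} is an amicable partition. -/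
open Finset

/-- `K` is pure of dimension `d`: every face has at most `d+1` vertices and is
contained in a face with exactly `d+1` vertices (a facet). -/
def IsPure {V : Type} [DecidableEq V] (d : ℕ) (K : Finset (Finset V)) : Prop :=
  (∀ σ ∈ K, σ.card ≤ d + 1) ∧ ∀ σ ∈ K, ∃ γ ∈ K, σ ⊆ γ ∧ γ.card = d + 1

/-- `K` is a `d`-dimensional weak pseudomanifold: a pure `d`-dimensional simplicial
complex (with at least one facet) in which every `(d-1)`-face (i.e. `d`-element face)
is contained in exactly two facets. -/
def IsWPM {V : Type} [DecidableEq V] (d : ℕ) (K : Finset (Finset V)) : Prop :=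
  IsComplex K ∧ IsPure d K ∧ (∃ σ ∈ K, σ.card = d + 1) ∧
    ∀ σ ∈ K, σ.card = d → (K.filter fun γ => γ.card = d + 1 ∧ σ ⊆ γ).card = 2

/-- The link of `σ` in `K`: all faces `τ` disjoint from `σ` with `σ ∪ τ` a face. -/
def lk {V : Type} [DecidableEq V] (K : Finset (Finset V)) (σ : Finset V) :
    Finset (Finset V) :=
  K.filter fun τ => σ ∩ τ = ∅ ∧ σ ∪ τ ∈ K

/-- The vertex set of a simplicial complex. -/
def vertSet {V : Type} [DecidableEq V] [Fintype V] (K : Finset (Finset V)) : Finset V :=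
  Finset.univ.filter fun v => ({v} : Finset V) ∈ K

/-- The standard 2-sphere `S²₄(W)` on a 4-set `W`: all nonempty proper subsets of `W`. -/
def stdS2 {V : Type} [DecidableEq V] (W : Finset V) : Finset (Finset V) :=
  W.powerset.filter fun s => s.Nonempty ∧ s ≠ W

/-- Lemma 4.2: in a 12-vertex 6-dimensional weak pseudomanifold with
complementarity, if `A` is a 4-element face whose link is the standard 2-sphere on a
4-set `B`, and `C` is the set of the remaining 4 vertices, then `lk C = S²₄(A)` and
`lk B = S²₄(C)`; i.e. `{A, B, C}` is an amicable partition. -/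
theorem stmt_9 (M : Finset (Finset (Fin 12))) (hM : IsWPM 6 M)
    (hvert : ∀ v : Fin 12, ({v} : Finset (Fin 12)) ∈ M)
    (hcomp : Complementarity M)
    (A B : Finset (Fin 12)) (hA : A ∈ M) (hAcard : A.card = 4) (hBcard : B.card = 4)
    (hlkA : lk M A = stdS2 B) :
    lk M ((A ∪ B)ᶜ) = stdS2 A ∧ lk M B = stdS2 ((A ∪ B)ᶜ) := by
  obtain ⟨⟨hne, hsub⟩, ⟨hle7, hext⟩, -, hwpm⟩ := hM
  set C := (A ∪ B)ᶜ with hCdef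
  -- 4-neighbourliness
  have hnb : ∀ S : Finset (Fin 12), S.Nonempty → S.card ≤ 4 → S ∈ M := by
    intro S hS h4
    have hSc : Sᶜ.card = 12 - S.card := by rw [card_compl]; simp
    have hScne : Sᶜ.Nonempty := by rw [← card_pos, hSc]; omega
    refine (hcomp S hS hScne).mpr fun hmem => ?_
    have h7 := hle7 _ hmem
    have h12 := S.card_le_univ
    simp at h12
    omega
  -- A and B are disjoint
  have hBA : ∀ v ∈ B, v ∉ A := by
    intro b hb hbA
    have h1 : ({b} : Finset (Fin 12)) ∈ stdS2 B := by
      simp only [stdS2, mem_filter, mem_powerset]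
      refine ⟨singleton_subset_iff.mpr hb, singleton_nonempty b, fun h => ?_⟩
      have := congrArg Finset.card h
      simp [hBcard] at this
    rw [← hlkA] at h1
    simp only [lk, mem_filter] at h1
    have hb' : b ∈ A ∩ ({b} : Finset (Fin 12)) := by simp [hbA]
    rw [h1.2.1] at hb'
    simp at hb'
  have hAB : ∀ v ∈ A, v ∉ B := fun v hv hvB => hBA v hvB hv
  have hvC : ∀ v : Fin 12, v ∈ C ↔ v ∉ A ∧ v ∉ B := by
    intro v; simp only [hCdef, mem_compl, mem_union]; tauto
  have htri : ∀ v : Fin 12, v ∈ A ∨ v ∈ B ∨ v ∈ C := by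
    intro v
    by_cases h1 : v ∈ A
    · exact Or.inl h1
    by_cases h2 : v ∈ B
    · exact Or.inr (Or.inl h2)
    · exact Or.inr (Or.inr ((hvC v).mpr ⟨h1, h2⟩))
  have hCA : ∀ v ∈ C, v ∉ A := fun v hv => ((hvC v).mp hv).1
  have hCB : ∀ v ∈ C, v ∉ B := fun v hv => ((hvC v).mp hv).2
  -- cardinalities
  have hABcard : (A ∪ B).card = 8 := by
    rw [card_union_of_disjoint (disjoint_left.mpr hAB)]; omega
  have hCcard : C.card = 4 := by
    rw [hCdef, card_compl, hABcard]; simp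
  have hAne : A.Nonempty := card_pos.mp (by omega)
  have hBne : B.Nonempty := card_pos.mp (by omega)
  have hCne : C.Nonempty := card_pos.mp (by omega)
  -- facets through A
  have hfacetB : ∀ b ∈ B, A ∪ (B \ {b}) ∈ M := by
    intro b hb
    have hcard3 : (B \ {b}).card = 3 := by
      rw [card_sdiff_of_subset (singleton_subset_iff.mpr hb)]; simp [hBcard]
    have h1 : B \ {b} ∈ stdS2 B := by
      simp only [stdS2, mem_filter, mem_powerset]
      refine ⟨sdiff_subset, card_pos.mp (by omega), fun h => ?_⟩
      have := congrArg Finset.card h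
      omega
    rw [← hlkA] at h1
    simp only [lk, mem_filter] at h1
    exact h1.2.2
  -- complement identity for C ∪ {b}
  have hcomplCb : ∀ b ∈ B, (C ∪ ({b} : Finset (Fin 12)))ᶜ = A ∪ (B \ {b}) := by
    intro b hb
    ext v
    have h1 := hvC v
    have h2 := hAB v
    simp only [mem_compl, mem_union, mem_sdiff, mem_singleton]
    by_cases hvb : v = b
    · subst hvb; simp only [not_true_eq_false, or_true, not_or]; tauto
    · rcases htri v with h | h | h
      · have := h2 h; tauto
      · have := (hvC v); tauto
      · have := (hvC v).mp h; tauto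
  -- C ∪ {b} is a non-face
  have hCb : ∀ b ∈ B, C ∪ ({b} : Finset (Fin 12)) ∉ M := by
    intro b hb hmem
    have hcne : ((C ∪ ({b} : Finset (Fin 12)))ᶜ).Nonempty := by
      rw [hcomplCb b hb]; exact hAne.mono subset_union_left
    have h := (hcomp _ (hCne.mono subset_union_left) hcne).mp hmem
    rw [hcomplCb b hb] at h
    exact h (hfacetB b hb)
  -- extend C to a facet γ
  have hCM : C ∈ M := hnb C hCne (by omega)
  obtain ⟨γ, hγM, hCγ, hγ7⟩ := hext C hCM
  have hγB : ∀ b ∈ B, b ∉ γ := by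
    intro b hb hbγ
    refine hCb b hb (hsub γ hγM _ (union_subset hCγ (singleton_subset_iff.mpr hbγ)) ?_)
    exact ⟨b, by simp⟩
  have hγAC : ∀ v ∈ γ, v ∈ A ∨ v ∈ C := by
    intro v hv
    rcases htri v with h | h | h
    · exact Or.inl h
    · exact absurd hv (hγB v h)
    · exact Or.inr h
  have hγsdiff : (γ \ C).card = 3 := by
    have h1 := card_inter_add_card_sdiff γ C
    rw [inter_eq_right.mpr hCγ] at h1
    omega
  have hAγsub : γ \ C = A ∩ γ := by
    ext v
    simp only [mem_sdiff, mem_inter]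
    constructor
    · intro ⟨h1, h2⟩
      rcases hγAC v h1 with h | h
      · exact ⟨h, h1⟩
      · exact absurd h h2
    · intro ⟨h1, h2⟩
      exact ⟨h2, fun h => hCA v h h1⟩
  have hAγ1 : (A \ γ).card = 1 := by
    have h1 := card_inter_add_card_sdiff A γ
    rw [← hAγsub] at h1
    omega
  obtain ⟨a₀, ha₀⟩ := card_eq_one.mp hAγ1
  have ha₀A : a₀ ∈ A := by
    have : a₀ ∈ A \ γ := ha₀ ▸ mem_singleton_self a₀
    exact (mem_sdiff.mp this).1
  have ha₀γ : a₀ ∉ γ := by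
    have : a₀ ∈ A \ γ := ha₀ ▸ mem_singleton_self a₀
    exact (mem_sdiff.mp this).2
  have hγeq : γ = C ∪ (A \ {a₀}) := by
    ext v
    simp only [mem_union, mem_sdiff, mem_singleton]
    constructor
    · intro hv
      rcases hγAC v hv with h | h
      · exact Or.inr ⟨h, fun he => ha₀γ (he ▸ hv)⟩
      · exact Or.inl h
    · rintro (h | ⟨h1, h2⟩)
      · exact hCγ h
      · by_contra hvγ
        have : v ∈ A \ γ := mem_sdiff.mpr ⟨h1, hvγ⟩
        rw [ha₀] at this
        exact h2 (mem_singleton.mp this)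
  -- the key step: C ∪ (A \ {a}) ∈ M for every a ∈ A
  have hstep6 : ∀ a ∈ A, C ∪ (A \ {a}) ∈ M := by
    intro a ha
    by_cases haa : a = a₀
    · subst haa; rw [← hγeq]; exact hγM
    · set σ := C ∪ (A \ ({a₀, a} : Finset (Fin 12))) with hσdef
      have hCσ : C ⊆ σ := subset_union_left
      have hσγ : σ ⊆ γ := by
        rw [hγeq]
        apply union_subset_union_right
        intro v hv
        simp only [mem_sdiff, mem_insert, mem_singleton] at hv ⊢
        tauto
      have hσM : σ ∈ M := hsub γ hγM σ hσγ (hCne.mono hCσ)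
      have hpairA : ({a₀, a} : Finset (Fin 12)) ⊆ A := by
        intro v hv
        simp only [mem_insert, mem_singleton] at hv
        rcases hv with h | h
        · exact h ▸ ha₀A
        · exact h ▸ ha
      have hpair2 : ({a₀, a} : Finset (Fin 12)).card = 2 := by
        rw [card_insert_of_notMem (by simp only [mem_singleton]; exact fun h => haa h.symm), card_singleton]
      have hσcard : σ.card = 6 := by
        rw [hσdef, card_union_of_disjoint (disjoint_left.mpr fun v hv h => hCA v hv (mem_sdiff.mp h).1),
          card_sdiff_of_subset hpairA, hpair2, hCcard, hAcard]
      have hc2 := hwpm σ hσM hσcard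
      by_contra hcon
      have hsubs : M.filter (fun γ' => γ'.card = 7 ∧ σ ⊆ γ') ⊆ {γ} := by
        intro γ' hγ'
        simp only [mem_filter] at hγ'
        obtain ⟨hγ'M, hγ'7, hσγ'⟩ := hγ'
        have hcard1 : (γ' \ σ).card = 1 := by
          have h1 := card_inter_add_card_sdiff γ' σ
          rw [inter_eq_right.mpr hσγ'] at h1
          omega
        obtain ⟨v, hv⟩ := card_eq_one.mp hcard1
        have hvmem : v ∈ γ' ∧ v ∉ σ := by
          have : v ∈ γ' \ σ := hv ▸ mem_singleton_self v
          exact mem_sdiff.mp this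
        have hγ'eq : γ' = σ ∪ {v} := by
          ext w
          simp only [mem_union, mem_singleton]
          constructor
          · intro hw
            by_cases hwσ : w ∈ σ
            · exact Or.inl hwσ
            · have : w ∈ γ' \ σ := mem_sdiff.mpr ⟨hw, hwσ⟩
              rw [hv] at this
              exact Or.inr (mem_singleton.mp this)
          · rintro (h | h)
            · exact hσγ' h
            · exact h ▸ hvmem.1
        have hvB : v ∉ B := by
          intro hvB
          refine hCb v hvB (hsub γ' hγ'M _ (union_subset (hCσ.trans hσγ')
            (singleton_subset_iff.mpr hvmem.1)) ⟨v, by simp⟩)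
        have hvC' : v ∉ C := fun h => hvmem.2 (hCσ h)
        have hvA : v ∈ A := by
          rcases htri v with h | h | h
          · exact h
          · exact absurd h hvB
          · exact absurd h hvC'
        have hvpair : v = a₀ ∨ v = a := by
          by_contra hc
          push_neg at hc
          exact hvmem.2 (mem_union_right _ (mem_sdiff.mpr ⟨hvA, by
            simp only [mem_insert, mem_singleton]; tauto⟩))
        rcases hvpair with h | h
        · exfalso
          subst h
          have heq2 : σ ∪ {v} = C ∪ (A \ {a}) := by
            rw [hσdef]
            ext w
            simp only [mem_union, mem_sdiff, mem_insert, mem_singleton]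
            constructor
            · rintro ((h | ⟨h1, h2⟩) | h)
              · exact Or.inl h
              · push_neg at h2; exact Or.inr ⟨h1, h2.2⟩
              · exact Or.inr ⟨h ▸ ha₀A, h ▸ fun he => haa he.symm⟩
            · rintro (h | ⟨h1, h2⟩)
              · exact Or.inl (Or.inl h)
              · by_cases hw : w = v
                · exact Or.inr hw
                · exact Or.inl (Or.inr ⟨h1, by push_neg; exact ⟨hw, h2⟩⟩)
          rw [hγ'eq, heq2] at hγ'M
          exact hcon hγ'M
        · subst h
          have heq2 : σ ∪ {v} = γ := by
            rw [hσdef, hγeq]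
            ext w
            simp only [mem_union, mem_sdiff, mem_insert, mem_singleton]
            constructor
            · rintro ((h | ⟨h1, h2⟩) | h)
              · exact Or.inl h
              · push_neg at h2; exact Or.inr ⟨h1, h2.1⟩
              · exact Or.inr ⟨h ▸ ha, h ▸ haa⟩
            · rintro (h | ⟨h1, h2⟩)
              · exact Or.inl (Or.inl h)
              · by_cases hw : w = v
                · exact Or.inr hw
                · exact Or.inl (Or.inr ⟨h1, by push_neg; exact ⟨h2, hw⟩⟩)
          rw [mem_singleton, hγ'eq, heq2]
      have := card_le_card hsubs
      rw [hc2, card_singleton] at this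
      omega
  -- B ∪ {a} is a non-face for a ∈ A
  have hcomplBa : ∀ a ∈ A, (B ∪ ({a} : Finset (Fin 12)))ᶜ = C ∪ (A \ {a}) := by
    intro a ha
    ext v
    simp only [mem_compl, mem_union, mem_sdiff, mem_singleton, not_or]
    constructor
    · intro ⟨h1, h2⟩
      rcases htri v with h | h | h
      · exact Or.inr ⟨h, h2⟩
      · exact absurd h h1
      · exact Or.inl h
    · rintro (h | ⟨h1, h2⟩)
      · exact ⟨hCB v h, fun he => hCA v h (he ▸ ha)⟩
      · exact ⟨hAB v h1, h2⟩
  have hkey : ∀ a ∈ A, B ∪ ({a} : Finset (Fin 12)) ∉ M := by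
    intro a ha hmem
    have hcne : ((B ∪ ({a} : Finset (Fin 12)))ᶜ).Nonempty := by
      rw [hcomplBa a ha]; exact hCne.mono subset_union_left
    have h := (hcomp _ (hBne.mono subset_union_left) hcne).mp hmem
    rw [hcomplBa a ha] at h
    exact h (hstep6 a ha)
  -- A ∪ ρ is a non-face for ∅ ≠ ρ ⊆ C
  have hAr : ∀ ρ : Finset (Fin 12), ρ ⊆ C → ρ.Nonempty → A ∪ ρ ∉ M := by
    intro ρ hρC hρne hmem
    have hρM : ρ ∈ M := hnb ρ hρne ((card_le_card hρC).trans (by omega))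
    have hdis : A ∩ ρ = ∅ := by
      rw [← Finset.disjoint_iff_inter_eq_empty]
      exact disjoint_left.mpr fun v hv h => hCA v (hρC h) hv
    have h1 : ρ ∈ lk M A := by
      simp only [lk, mem_filter]
      exact ⟨hρM, hdis, hmem⟩
    rw [hlkA] at h1
    simp only [stdS2, mem_filter, mem_powerset] at h1
    obtain ⟨x, hx⟩ := hρne
    exact hCB x (hρC hx) (h1.1 hx)
  -- A ∪ C and B ∪ C are non-faces
  have hBcompl : Bᶜ = A ∪ C := by
    ext v
    simp only [mem_compl, mem_union]
    constructor
    · intro h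
      rcases htri v with h1 | h1 | h1
      · exact Or.inl h1
      · exact absurd h1 h
      · exact Or.inr h1
    · rintro (h | h)
      · exact hAB v h
      · exact hCB v h
  have hACnot : A ∪ C ∉ M := by
    have h := (hcomp B hBne (by rw [hBcompl]; exact hAne.mono subset_union_left)).mp
      (hnb B hBne (by omega))
    rwa [hBcompl] at h
  have hAcompl : Aᶜ = B ∪ C := by
    ext v
    simp only [mem_compl, mem_union]
    constructor
    · intro h
      rcases htri v with h1 | h1 | h1
      · exact absurd h1 h
      · exact Or.inl h1
      · exact Or.inr h1
    · rintro (h | h)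
      · exact hBA v h
      · exact hCA v h
  have hBCnot : B ∪ C ∉ M := by
    have h := (hcomp A hAne (by rw [hAcompl]; exact hBne.mono subset_union_left)).mp hA
    rwa [hAcompl] at h
  constructor
  · -- lk M C = stdS2 A
    ext τ
    simp only [lk, stdS2, mem_filter, mem_powerset]
    constructor
    · rintro ⟨hτM, hdis, hCτM⟩
      have hτA : τ ⊆ A := by
        intro v hv
        have hvC' : v ∉ C := by
          intro h
          have : v ∈ C ∩ τ := mem_inter.mpr ⟨h, hv⟩
          rw [hdis] at this
          exact notMem_empty v this
        have hvB : v ∉ B := by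
          intro hvB
          refine hCb v hvB (hsub _ hCτM _ (union_subset subset_union_left
            ((singleton_subset_iff.mpr (mem_union_right _ hv)))) ⟨v, by simp⟩)
        rcases htri v with h | h | h
        · exact h
        · exact absurd h hvB
        · exact absurd h hvC'
      refine ⟨hτA, hne τ hτM, fun he => ?_⟩
      subst he
      rw [union_comm] at hCτM
      exact hACnot hCτM
    · rintro ⟨hτA, hτne, hτneq⟩
      have hdis : C ∩ τ = ∅ := by
        rw [← Finset.disjoint_iff_inter_eq_empty]
        exact disjoint_left.mpr fun v hv h => hCA v hv (hτA h)
      refine ⟨hnb τ hτne ((card_le_card hτA).trans (by omega)), hdis, ?_⟩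
      obtain ⟨a, haA, haτ⟩ : ∃ a ∈ A, a ∉ τ := by
        by_contra hc
        push_neg at hc
        exact hτneq (Subset.antisymm hτA hc)
      refine hsub _ (hstep6 a haA) _ (union_subset subset_union_left ?_)
        (hCne.mono subset_union_left)
      intro v hv
      exact mem_union_right _ (mem_sdiff.mpr ⟨hτA hv, fun he =>
        haτ ((mem_singleton.mp he) ▸ hv)⟩)
  · -- lk M B = stdS2 C
    ext τ
    simp only [lk, stdS2, mem_filter, mem_powerset]
    constructor
    · rintro ⟨hτM, hdis, hBτM⟩
      have hτC : τ ⊆ C := by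
        intro v hv
        have hvB : v ∉ B := by
          intro h
          have : v ∈ B ∩ τ := mem_inter.mpr ⟨h, hv⟩
          rw [hdis] at this
          exact notMem_empty v this
        have hvA : v ∉ A := by
          intro hvA
          refine hkey v hvA (hsub _ hBτM _ (union_subset subset_union_left
            (singleton_subset_iff.mpr (mem_union_right _ hv))) ⟨v, by simp⟩)
        rcases htri v with h | h | h
        · exact absurd h hvA
        · exact absurd h hvB
        · exact h
      refine ⟨hτC, hne τ hτM, fun he => ?_⟩
      subst he
      exact hBCnot hBτM
    · rintro ⟨hτC, hτne, hτneq⟩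
      have hdis : B ∩ τ = ∅ := by
        rw [← Finset.disjoint_iff_inter_eq_empty]
        exact disjoint_left.mpr fun v hv h => hCB v (hτC h) hv
      refine ⟨hnb τ hτne ((card_le_card hτC).trans (by omega)), hdis, ?_⟩
      have hcomplBτ : (B ∪ τ)ᶜ = A ∪ (C \ τ) := by
        ext v
        simp only [mem_compl, mem_union, mem_sdiff, not_or]
        constructor
        · intro ⟨h1, h2⟩
          rcases htri v with h | h | h
          · exact Or.inl h
          · exact absurd h h1
          · exact Or.inr ⟨h, h2⟩
        · rintro (h | ⟨h1, h2⟩)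
          · exact ⟨hAB v h, fun he => hCA v (hτC he) h⟩
          · exact ⟨hCB v h1, h2⟩
      have hCτne : (C \ τ).Nonempty := by
        rw [sdiff_nonempty]
        intro h
        exact hτneq (Subset.antisymm hτC h)
      have hnot : (B ∪ τ)ᶜ ∉ M := by
        rw [hcomplBτ]
        exact hAr (C \ τ) sdiff_subset hCτne
      exact (hcomp (B ∪ τ) (hBne.mono subset_union_left)
        (by rw [hcomplBτ]; exact hAne.mono subset_union_left)).mpr hnot
end

section
/- Suppose every 3-element face of a 12-vertex 6-dimensional complementarity weak pseudomanifold M has as its link a connected combinatorial 2-manifold. Then c-counting forces every such link to be a 2-sphere: if c_i denotes the number of 4-element faces of degree i (link having i vertices), then Σ c_i = 495, Σ i·c_i = 3300, and Σ (2i−4)c_i ≤ 4620 with equality, hence every link of a 4-element face has exactly 2(deg−2) facets, i.e., Euler characteristic 2. -/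
open Finset

/-- A simplicial complex is connected if any two of its vertices are joined by a
path of edges. -/
def ComplexConnected {V : Type} [DecidableEq V] [Fintype V] (L : Finset (Finset V)) : Prop :=
  ∀ u ∈ vertSet L, ∀ v ∈ vertSet L,
    Relation.ReflTransGen (fun a b : V => ({a, b} : Finset V) ∈ L) u v

/-- `L` is a circle (cycle complex): a connected 1-dimensional simplicial complex in
which every vertex lies in exactly two edges. -/
def IsCycle {V : Type} [DecidableEq V] [Fintype V] (L : Finset (Finset V)) : Prop :=
  IsComplex L ∧ (∀ σ ∈ L, σ.card ≤ 2) ∧ (∃ σ ∈ L, σ.card = 2) ∧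
    (∀ v ∈ vertSet L, (L.filter fun e => e.card = 2 ∧ v ∈ e).card = 2) ∧
    ComplexConnected L

/-- `L` is a closed combinatorial 2-manifold: a 2-dimensional simplicial complex in
which the link of every vertex is a circle. -/
def IsClosed2Mfd {V : Type} [DecidableEq V] [Fintype V] (L : Finset (Finset V)) : Prop :=
  IsComplex L ∧ (∀ σ ∈ L, σ.card ≤ 3) ∧ (∃ σ ∈ L, σ.card = 3) ∧
    ∀ v ∈ vertSet L, IsCycle (lk L {v})

/-- `L` is a combinatorial 2-sphere: a connected closed combinatorial 2-manifold of
Euler characteristic 2. -/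
def Is2Sphere {V : Type} [DecidableEq V] [Fintype V] (L : Finset (Finset V)) : Prop :=
  IsClosed2Mfd L ∧ ComplexConnected L ∧ eulerChar L = 2

/-- The degree of a face: the number of vertices of its link. -/
def degFace {V : Type} [DecidableEq V] [Fintype V] (K : Finset (Finset V))
    (σ : Finset V) : ℕ :=
  (vertSet (lk K σ)).card


/-!
Complementarity fixes the f-vector of `M`: every 4-set is a face, `f₆ = 462` (complementary
6-sets pair off), `f₇ = 132` (each 6-face lies in two facets) and `f₅ = 792 - f₇ = 660`. Double
counting gives `Σ deg σ = 5 f₅ = 3300` and `Σ f(lk σ) = 35 f₇ = 4620 = Σ (2 deg σ - 4)` over the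
495 tetrahedra `σ`.

A connected closed surface with `v` vertices, `e` edges and `f` triangles has `f ≥ 2v - 4`. The
parent edges of a breadth-first search tree are `v - 1` edges, and cutting them leaves the dual
graph connected: the boundary of a component would be a nonempty subforest with an even number
of edges at every vertex, but a nonempty forest has a leaf. So `f - 1 ≤ e - (v - 1)`, and
`3f = 2e`. Hence every link attains `f = 2v - 4`, that is `v - e + f = 2`.
-/

def facesOfCard {V : Type} (K : Finset (Finset V)) (k : ℕ) : Finset (Finset V) :=
  K.filter (·.card = k)

@[simp]
lemma mem_facesOfCard {V : Type} {K : Finset (Finset V)} {σ : Finset V} {k : ℕ} :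
    σ ∈ facesOfCard K k ↔ σ ∈ K ∧ σ.card = k :=
  mem_filter

section Complex

variable {V : Type} [DecidableEq V] {K : Finset (Finset V)} {σ τ ρ : Finset V} {k l : ℕ}

@[simp]
lemma mem_lk : τ ∈ lk K σ ↔ τ ∈ K ∧ σ ∩ τ = ∅ ∧ σ ∪ τ ∈ K :=
  mem_filter

lemma IsComplex.mem_of_subset (hK : IsComplex K) (hρ : ρ ∈ K) (hσρ : σ ⊆ ρ)
    (hσ : σ.Nonempty) : σ ∈ K :=
  hK.2 ρ hρ σ hσρ hσ

lemma IsComplex.pair_mem (hK : IsComplex K) (hσ : σ ∈ K) {a b : V} (ha : a ∈ σ) (hb : b ∈ σ) :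
    ({a, b} : Finset V) ∈ K :=
  hK.mem_of_subset hσ (insert_subset ha (singleton_subset_iff.2 hb)) (insert_nonempty a {b})

lemma IsComplex.filter_facesOfCard_subset (hK : IsComplex K) (hρ : ρ ∈ K) (hk : 0 < k) :
    (facesOfCard K k).filter (· ⊆ ρ) = ρ.powersetCard k := by
  ext σ
  simp only [mem_filter, mem_facesOfCard, mem_powersetCard]
  refine ⟨fun h => ⟨h.2, h.1.2⟩, fun h => ⟨⟨hK.mem_of_subset hρ h.1 ?_, h.2⟩, h.1⟩⟩
  rw [← card_pos, h.2]
  exact hk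

lemma IsComplex.sum_card_filter_facesOfCard_supset (hK : IsComplex K) (hk : 0 < k) :
    ∑ σ ∈ facesOfCard K k, ((facesOfCard K l).filter (σ ⊆ ·)).card
      = (facesOfCard K l).card * l.choose k := by
  have h := sum_card_bipartiteAbove_eq_sum_card_bipartiteBelow (s := facesOfCard K k)
    (t := facesOfCard K l) (fun σ ρ => σ ⊆ ρ)
  simp only [bipartiteAbove, bipartiteBelow] at h
  rw [h, ← smul_eq_mul, ← sum_const]
  refine sum_congr rfl fun ρ hρ => ?_
  rw [mem_facesOfCard] at hρ
  rw [hK.filter_facesOfCard_subset hρ.1 hk, card_powersetCard, hρ.2]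

lemma IsComplex.card_filter_facesOfCard_lk (hK : IsComplex K) (σ : Finset V) (hk : 0 < k)
    (Q : Finset V → Prop) [DecidablePred Q] :
    ((facesOfCard (lk K σ) k).filter fun τ => Q (σ ∪ τ)).card
      = ((facesOfCard K (σ.card + k)).filter fun ρ => σ ⊆ ρ ∧ Q ρ).card := by
  refine card_nbij' (σ ∪ ·) (· \ σ) ?_ ?_ ?_ ?_
  · intro τ hτ
    simp only [coe_filter, mem_facesOfCard, mem_lk, Set.mem_ofPred_eq] at hτ ⊢
    obtain ⟨⟨⟨-, hdisj, hστ⟩, hcard⟩, hQ⟩ := hτ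
    rw [card_union_of_disjoint (disjoint_iff_inter_eq_empty.2 hdisj), hcard]
    exact ⟨⟨hστ, rfl⟩, subset_union_left, hQ⟩
  · intro ρ hρ
    simp only [coe_filter, mem_facesOfCard, mem_lk, Set.mem_ofPred_eq] at hρ ⊢
    obtain ⟨⟨hρK, hcard⟩, hσρ, hQ⟩ := hρ
    have hsd : (ρ \ σ).card = k := by rw [card_sdiff_of_subset hσρ, hcard]; omega
    rw [union_sdiff_of_subset hσρ]
    refine ⟨⟨⟨hK.mem_of_subset hρK sdiff_subset ?_, inter_sdiff_self σ ρ, hρK⟩, hsd⟩, hQ⟩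
    rw [← card_pos, hsd]
    exact hk
  · intro τ hτ
    simp only [coe_filter, mem_facesOfCard, mem_lk, Set.mem_ofPred_eq] at hτ
    exact union_sdiff_cancel_left (disjoint_iff_inter_eq_empty.2 hτ.1.1.2.1)
  · intro ρ hρ
    simp only [coe_filter, mem_facesOfCard, Set.mem_ofPred_eq] at hρ
    exact union_sdiff_of_subset hρ.2.1

lemma IsComplex.card_facesOfCard_lk (hK : IsComplex K) (σ : Finset V) (hk : 0 < k) :
    (facesOfCard (lk K σ) k).card = ((facesOfCard K (σ.card + k)).filter (σ ⊆ ·)).card := by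
  simpa using hK.card_filter_facesOfCard_lk σ hk fun _ => True

lemma mem_vertSet [Fintype V] {v : V} : v ∈ vertSet K ↔ {v} ∈ K := by
  simp [vertSet]

lemma IsComplex.mem_vertSet_of_mem [Fintype V] (hK : IsComplex K) (hσ : σ ∈ K) {v : V}
    (hv : v ∈ σ) : v ∈ vertSet K :=
  mem_vertSet.2 (hK.mem_of_subset hσ (singleton_subset_iff.2 hv) (singleton_nonempty v))

lemma card_facesOfCard_one [Fintype V] (K : Finset (Finset V)) :
    (facesOfCard K 1).card = (vertSet K).card := by
  symm
  refine card_bij (fun v _ => {v}) (fun v hv => ?_) (fun _ _ _ _ h => singleton_injective h) ?_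
  · simpa using mem_vertSet.1 hv
  · intro s hs
    rw [mem_facesOfCard, card_eq_one] at hs
    obtain ⟨hs, v, rfl⟩ := hs
    exact ⟨v, mem_vertSet.2 hs, rfl⟩

lemma IsComplex.degFace_eq [Fintype V] (hK : IsComplex K) (σ : Finset V) :
    degFace K σ = ((facesOfCard K (σ.card + 1)).filter (σ ⊆ ·)).card := by
  rw [degFace, ← card_facesOfCard_one, hK.card_facesOfCard_lk σ one_pos]

lemma eulerChar_eq_of_card_le_three (hK : IsComplex K) (h3 : ∀ σ ∈ K, σ.card ≤ 3) :
    eulerChar K = (facesOfCard K 1).card - (facesOfCard K 2).card + (facesOfCard K 3).card := by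
  have hterm : ∀ σ ∈ K, (-1 : ℤ) ^ (σ.card - 1)
      = (if σ.card = 1 then 1 else 0) - (if σ.card = 2 then 1 else 0)
        + (if σ.card = 3 then 1 else 0) := by
    intro σ hσ
    have h1 : 0 < σ.card := card_pos.2 (hK.1 σ hσ)
    have := h3 σ hσ
    interval_cases σ.card <;> norm_num
  rw [eulerChar, sum_congr rfl hterm, sum_add_distrib, sum_sub_distrib, sum_boole, sum_boole,
    sum_boole]
  rfl

lemma IsPure.facesOfCard_eq_empty {d : ℕ} (hK : IsPure d K) (hk : d + 1 < k) :
    facesOfCard K k = ∅ :=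
  filter_eq_empty_iff.2 fun σ hσ => by have := hK.1 σ hσ; omega

lemma Complementarity.card_facesOfCard_add [Fintype V] (hK : Complementarity K) (hk : 0 < k)
    (hkn : k < Fintype.card V) :
    (facesOfCard K k).card + (facesOfCard K (Fintype.card V - k)).card
      = (Fintype.card V).choose k := by
  have hne : ∀ A : Finset V, A.card = k → A.Nonempty ∧ Aᶜ.Nonempty := fun A hA => by
    rw [← card_pos, ← card_pos, card_compl, hA]
    omega
  have hfaces : (univ.powersetCard k).filter (· ∈ K) = facesOfCard K k := by
    ext A
    simp [and_comm]
  have hcompl : ((univ.powersetCard k).filter (· ∉ K)).card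
      = (facesOfCard K (Fintype.card V - k)).card := by
    refine card_nbij' compl compl (fun A hA => ?_) (fun A hA => ?_) (fun A _ => compl_compl A)
      (fun A _ => compl_compl A)
    · simp only [coe_filter, mem_powersetCard, subset_univ, true_and, Set.mem_ofPred_eq,
        mem_coe, mem_facesOfCard] at hA ⊢
      obtain ⟨hA, hAK⟩ := hA
      rw [card_compl, hA]
      exact ⟨by simpa using mt ((hK A (hne A hA).1 (hne A hA).2).2) hAK, rfl⟩
    · simp only [coe_filter, mem_powersetCard, subset_univ, true_and, Set.mem_ofPred_eq,
        mem_coe, mem_facesOfCard] at hA ⊢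
      obtain ⟨hAK, hA⟩ := hA
      have hAc : Aᶜ.card = k := by rw [card_compl, hA]; omega
      refine ⟨hAc, fun hAcK => ?_⟩
      have := (hK Aᶜ (hne _ hAc).1 (hne _ hAc).2).1 hAcK
      rw [compl_compl] at this
      exact this hAK
  rw [← hfaces, ← hcompl, card_filter_add_card_filter_not, card_powersetCard, card_univ]

lemma inter_eq_of_card_three {t t' e : Finset V} (ht : t.card = 3) (ht' : t'.card = 3)
    (hne : t ≠ t') (he : e.card = 2) (het : e ⊆ t) (het' : e ⊆ t') : t ∩ t' = e := by
  have hle : (t ∩ t').card ≤ 2 := by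
    by_contra! h
    have h1 := eq_of_subset_of_card_le (inter_subset_left (s₁ := t) (s₂ := t')) (by omega)
    have h2 := eq_of_subset_of_card_le (inter_subset_right (s₁ := t) (s₂ := t')) (by omega)
    exact hne (h1.symm.trans h2)
  exact (eq_of_subset_of_card_le (subset_inter het het') (by omega)).symm

noncomputable def boundaryEdges (K : Finset (Finset V)) (P : Finset V → Prop) :
    Finset (Finset V) := by
  classical exact (facesOfCard K 2).filter fun e =>
    (∃ t ∈ facesOfCard K 3, e ⊆ t ∧ P t) ∧ ∃ t ∈ facesOfCard K 3, e ⊆ t ∧ ¬P t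

lemma mem_boundaryEdges {P : Finset V → Prop} {e : Finset V} :
    e ∈ boundaryEdges K P ↔ e ∈ facesOfCard K 2 ∧
      (∃ t ∈ facesOfCard K 3, e ⊆ t ∧ P t) ∧ ∃ t ∈ facesOfCard K 3, e ⊆ t ∧ ¬P t := by
  classical
  unfold boundaryEdges
  convert mem_filter

lemma iff_of_boundaryEdges_eq_empty {P : Finset V → Prop} (hB : boundaryEdges K P = ∅)
    {e t t' : Finset V} (he : e ∈ facesOfCard K 2) (ht : t ∈ facesOfCard K 3)
    (ht' : t' ∈ facesOfCard K 3) (het : e ⊆ t) (het' : e ⊆ t') : P t ↔ P t' := by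
  by_contra h
  refine (eq_empty_iff_forall_notMem.1 hB) e (mem_boundaryEdges.2 ⟨he, ?_⟩)
  by_cases hPt : P t
  · exact ⟨⟨t, ht, het, hPt⟩, t', ht', het', fun hPt' => h ⟨fun _ => hPt', fun _ => hPt⟩⟩
  · exact ⟨⟨t', ht', het', by tauto⟩, t, ht, het, hPt⟩

def dualGraph (L F : Finset (Finset V)) : SimpleGraph (facesOfCard L 3) where
  Adj t t' := t ≠ t' ∧ (t.1 ∩ t'.1).card = 2 ∧ t.1 ∩ t'.1 ∉ F
  symm := ⟨fun _ _ ⟨hne, hcard, hF⟩ => ⟨hne.symm, by rwa [inter_comm], by rwa [inter_comm]⟩⟩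
  loopless := ⟨fun _ h => h.1 rfl⟩

end Complex

lemma SimpleGraph.Reachable.exists_adj_dist_add_one {V : Type} {G : SimpleGraph V} {r v : V}
    (h : G.Reachable r v) (hne : v ≠ r) : ∃ u, G.Adj u v ∧ G.dist r u + 1 = G.dist r v := by
  obtain ⟨p, hp⟩ := h.exists_walk_length_eq_dist
  have hnil : ¬p.Nil := fun hnil => hne (hnil.eq).symm
  have hadj := p.adj_penultimate hnil
  refine ⟨p.penultimate, hadj, ?_⟩
  have h1 := SimpleGraph.dist_le p.dropLast
  have h2 := hadj.diff_dist_adj (u := r)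
  have h3 := h.pos_dist_of_ne hne.symm
  rw [SimpleGraph.Walk.length_dropLast, hp] at h1
  omega

lemma Relation.ReflTransGen.iff_of_overlap {α β : Type} {r : α → α → Prop} {S : α → β → Prop}
    {P : β → Prop} (hoverlap : ∀ a b, r a b → a ≠ b → ∃ y, S a y ∧ S b y)
    (hconst : ∀ a y y', S a y → S a y' → (P y ↔ P y')) {a b : α}
    (h : Relation.ReflTransGen r a b) {y y' : β} (hy : S a y) (hy' : S b y') : P y ↔ P y' := by
  induction h generalizing y' with
  | refl => exact hconst a y y' hy hy'
  | @tail b c _ hbc ih =>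
    obtain rfl | hne := eq_or_ne b c
    · exact ih hy'
    · obtain ⟨z, hbz, hcz⟩ := hoverlap b c hbc hne
      exact (ih hbz).trans (hconst c z y' hcz hy')

section Forest

variable {V : Type} [DecidableEq V]

/-- These are exactly the edge sets of forests, with `d` the depth below a root and `p` the
parent. -/
def IsGradedForest (F : Finset (Finset V)) : Prop :=
  ∃ (d : V → ℕ) (p : V → V), ∀ e ∈ F, ∃ x, e = {x, p x} ∧ d (p x) + 1 = d x

/-- An endpoint of maximal rank is a leaf: its only edge goes to its parent. -/
lemma IsGradedForest.exists_card_filter_mem_eq_one {F B : Finset (Finset V)}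
    (hF : IsGradedForest F) (hBF : B ⊆ F) (hB : B.Nonempty) :
    ∃ x, (B.filter (x ∈ ·)).card = 1 := by
  obtain ⟨d, p, hdp⟩ := hF
  have hS : (B.biUnion id).Nonempty := by
    obtain ⟨e, he⟩ := hB
    obtain ⟨y, rfl, -⟩ := hdp e (hBF he)
    exact ⟨y, mem_biUnion.2 ⟨_, he, mem_insert_self _ _⟩⟩
  obtain ⟨x, hxS, hmax⟩ := (B.biUnion id).exists_max_image d hS
  have hedge : ∀ e ∈ B, x ∈ e → e = {x, p x} := by
    intro e he hxe
    obtain ⟨y, rfl, hy⟩ := hdp e (hBF he)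
    rcases mem_insert.1 hxe with rfl | hx
    · rfl
    · have := hmax y (mem_biUnion.2 ⟨_, he, mem_insert_self _ _⟩)
      rw [mem_singleton.1 hx] at this
      omega
  obtain ⟨e, he, hxe⟩ := mem_biUnion.1 hxS
  refine ⟨x, card_eq_one.2 ⟨e, eq_singleton_iff_unique_mem.2 ⟨mem_filter.2 ⟨he, hxe⟩, ?_⟩⟩⟩
  intro e' he'
  rw [mem_filter] at he'
  rw [hedge e' he'.1 he'.2, hedge e he hxe]

variable [Fintype V] {L : Finset (Finset V)}

lemma ComplexConnected.reachable_fromRel (hconn : ComplexConnected L) {u v : V}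
    (hu : u ∈ vertSet L) (hv : v ∈ vertSet L) :
    (SimpleGraph.fromRel fun a b : V => ({a, b} : Finset V) ∈ L).Reachable u v := by
  have h := hconn u hu v hv
  clear hv
  induction h with
  | refl => rfl
  | @tail b c _ hbc ih =>
    obtain rfl | hne := eq_or_ne b c
    · exact ih
    · exact ih.trans (SimpleGraph.Adj.reachable (by simp [hne, hbc]))

/-- The parent edges of a breadth-first search tree, ranked by the distance to the root. -/
lemma ComplexConnected.exists_isGradedForest (hconn : ComplexConnected L)
    (hL : (vertSet L).Nonempty) :
    ∃ F ⊆ facesOfCard L 2, F.card + 1 = (vertSet L).card ∧ IsGradedForest F := by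
  obtain ⟨r, hr⟩ := hL
  set G := SimpleGraph.fromRel fun a b : V => ({a, b} : Finset V) ∈ L
  have hparent : ∀ v, ∃ u, v ∈ (vertSet L).erase r → G.Adj u v ∧ G.dist r u + 1 = G.dist r v := by
    intro v
    by_cases hv : v ∈ (vertSet L).erase r
    · obtain ⟨u, hu⟩ := (hconn.reachable_fromRel hr (mem_of_mem_erase hv)).exists_adj_dist_add_one
        (ne_of_mem_erase hv)
      exact ⟨u, fun _ => hu⟩
    · exact ⟨r, fun h => absurd h hv⟩
  choose p hp using hparent
  have hedge : ∀ v ∈ (vertSet L).erase r, ({v, p v} : Finset V) ∈ facesOfCard L 2 := by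
    intro v hv
    obtain ⟨hne, hvL⟩ := SimpleGraph.fromRel_adj _ _ _ |>.1 (hp v hv).1
    rw [mem_facesOfCard, card_pair hne.symm, pair_comm]
    exact ⟨hvL.elim id fun h => by rwa [pair_comm], rfl⟩
  refine ⟨((vertSet L).erase r).image fun v => {v, p v}, ?_, ?_, G.dist r, p, ?_⟩
  · exact image_subset_iff.2 hedge
  · rw [card_image_of_injOn, card_erase_of_mem hr, Nat.sub_add_cancel (card_pos.2 ⟨r, hr⟩)]
    intro v hv w hw hvw
    have h1 := (hp v hv).2
    have h2 := (hp w hw).2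
    simp only [Finset.ext_iff, mem_insert, mem_singleton] at hvw
    have hv' : v = w ∨ v = p w := (hvw v).1 (Or.inl rfl)
    have hw' : w = v ∨ w = p v := (hvw w).2 (Or.inl rfl)
    grind
  · simp only [mem_image]
    rintro _ ⟨v, hv, rfl⟩
    exact ⟨v, rfl, (hp v hv).2⟩

end Forest

section Surface

variable {V : Type} [DecidableEq V] [Fintype V] {L F : Finset (Finset V)}

lemma IsClosed2Mfd.card_filter_triangles_supset (hL : IsClosed2Mfd L) {e : Finset V}
    (he : e ∈ facesOfCard L 2) : ((facesOfCard L 3).filter (e ⊆ ·)).card = 2 := by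
  rw [mem_facesOfCard] at he
  obtain ⟨u, v, huv, rfl⟩ := card_eq_two.1 he.2
  have hv : v ∈ vertSet (lk L {u}) := by
    rw [mem_vertSet, mem_lk]
    refine ⟨hL.1.mem_of_subset he.1 (by simp) (singleton_nonempty v), ?_, he.1⟩
    exact singleton_inter_of_notMem (by simpa using huv)
  have hu : u ∈ vertSet L := hL.1.mem_vertSet_of_mem he.1 (mem_insert_self u {v})
  have h := hL.1.card_filter_facesOfCard_lk {u} two_pos (v ∈ ·)
  rw [card_singleton] at h
  rw [← (hL.2.2.2 u hu).2.2.2.1 v hv, ← filter_filter, ← facesOfCard]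
  convert h.symm using 2
  · ext ρ
    simp [insert_subset_iff, singleton_subset_iff]
  · refine filter_congr fun τ _ => ?_
    simp [huv.symm]

lemma IsClosed2Mfd.three_mul_card_triangles (hL : IsClosed2Mfd L) :
    3 * (facesOfCard L 3).card = 2 * (facesOfCard L 2).card := by
  have h := hL.1.sum_card_filter_facesOfCard_supset (k := 2) (l := 3) two_pos
  rw [sum_congr rfl fun e he => hL.card_filter_triangles_supset he, sum_const] at h
  simp [Nat.choose] at h
  omega

lemma IsClosed2Mfd.eulerChar_eq_two (hL : IsClosed2Mfd L)
    (h : (facesOfCard L 3).card = 2 * (vertSet L).card - 4) : eulerChar L = 2 := by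
  have h32 := hL.three_mul_card_triangles
  have hpos : 0 < (facesOfCard L 3).card := by
    obtain ⟨t, ht, ht3⟩ := hL.2.2.1
    exact card_pos.2 ⟨t, mem_facesOfCard.2 ⟨ht, ht3⟩⟩
  rw [eulerChar_eq_of_card_le_three hL.1 hL.2.1, card_facesOfCard_one]
  omega

variable {P : Finset V → Prop}

/-- Around a vertex `v` the triangles are linked through the edges at `v`, since the link of
`v` is a connected circle. -/
lemma IsClosed2Mfd.iff_of_mem_of_mem (hL : IsClosed2Mfd L) (hB : boundaryEdges L P = ∅)
    {v : V} (hv : v ∈ vertSet L) {t t' : Finset V} (ht : t ∈ facesOfCard L 3)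
    (ht' : t' ∈ facesOfCard L 3) (hvt : v ∈ t) (hvt' : v ∈ t') : P t ↔ P t' := by
  have hlk : ∀ s ∈ facesOfCard L 3, v ∈ s → ∃ u ∈ s, u ≠ v ∧ u ∈ vertSet (lk L {v}) := by
    intro s hs hvs
    rw [mem_facesOfCard] at hs
    obtain ⟨u, hu⟩ : (s.erase v).Nonempty := by
      rw [← card_pos, card_erase_of_mem hvs, hs.2]; norm_num
    obtain ⟨huv, hus⟩ := mem_erase.1 hu
    refine ⟨u, hus, huv, mem_vertSet.2 (mem_lk.2 ⟨?_, ?_, ?_⟩)⟩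
    · exact mem_vertSet.1 (hL.1.mem_vertSet_of_mem hs.1 hus)
    · exact singleton_inter_of_notMem (by simpa using huv.symm)
    · exact hL.1.pair_mem hs.1 hvs hus
  obtain ⟨u, hut, huv, hu⟩ := hlk t ht hvt
  obtain ⟨u', hut', hu'v, hu'⟩ := hlk t' ht' hvt'
  refine ((hL.2.2.2 v hv).2.2.2.2 u hu u' hu').iff_of_overlap
    (S := fun a y => y ∈ facesOfCard L 3 ∧ v ∈ y ∧ a ∈ y ∧ a ≠ v) ?_ ?_
    ⟨ht, hvt, hut, huv⟩ ⟨ht', hvt', hut', hu'v⟩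
  · intro a b hab hne
    obtain ⟨-, hdisj, hL'⟩ := mem_lk.1 hab
    have hvab : v ∉ ({a, b} : Finset V) := fun h => by
      simpa [hdisj] using (mem_inter.2 ⟨mem_singleton_self v, h⟩ : v ∈ {v} ∩ {a, b})
    have hy : {v} ∪ {a, b} ∈ facesOfCard L 3 := by
      rw [mem_facesOfCard, ← insert_eq, card_insert_of_notMem hvab, card_pair hne]
      exact ⟨hL', rfl⟩
    exact ⟨_, ⟨hy, by simp, by simp, fun h => hvab (by simp [h])⟩,
      ⟨hy, by simp, by simp, fun h => hvab (by simp [h])⟩⟩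
  · rintro a y y' ⟨hy, hvy, hay, hav⟩ ⟨hy', hvy', hay', -⟩
    refine iff_of_boundaryEdges_eq_empty hB (mem_facesOfCard.2
      ⟨hL.1.pair_mem (mem_facesOfCard.1 hy).1 hvy hay, card_pair hav.symm⟩) hy hy'
      (insert_subset hvy (singleton_subset_iff.2 hay))
      (insert_subset hvy' (singleton_subset_iff.2 hay'))

lemma IsClosed2Mfd.iff_of_connected (hL : IsClosed2Mfd L) (hconn : ComplexConnected L)
    (hB : boundaryEdges L P = ∅) {t t' : Finset V} (ht : t ∈ facesOfCard L 3)
    (ht' : t' ∈ facesOfCard L 3) : P t ↔ P t' := by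
  obtain ⟨v, hvt⟩ := hL.1.1 t (mem_facesOfCard.1 ht).1
  obtain ⟨v', hvt'⟩ := hL.1.1 t' (mem_facesOfCard.1 ht').1
  refine (hconn v (hL.1.mem_vertSet_of_mem (mem_facesOfCard.1 ht).1 hvt) v'
    (hL.1.mem_vertSet_of_mem (mem_facesOfCard.1 ht').1 hvt')).iff_of_overlap
    (S := fun a y => y ∈ facesOfCard L 3 ∧ a ∈ y) ?_ ?_ ⟨ht, hvt⟩ ⟨ht', hvt'⟩
  · intro a b hab hne
    have he : {a, b} ∈ facesOfCard L 2 := mem_facesOfCard.2 ⟨hab, card_pair hne⟩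
    obtain ⟨y, hy⟩ : ((facesOfCard L 3).filter ({a, b} ⊆ ·)).Nonempty := by
      rw [← card_pos, hL.card_filter_triangles_supset he]; norm_num
    obtain ⟨hy, haby⟩ := mem_filter.1 hy
    exact ⟨y, ⟨hy, haby (by simp)⟩, hy, haby (by simp)⟩
  · rintro a y y' ⟨hy, hay⟩ ⟨hy', hay'⟩
    exact hL.iff_of_mem_of_mem hB (hL.1.mem_vertSet_of_mem (mem_facesOfCard.1 hy).1 hay) hy hy'
      hay hay'

lemma IsClosed2Mfd.odd_card_iff_mem_boundaryEdges (hL : IsClosed2Mfd L) (P : Finset V → Prop)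
    [DecidablePred P] {e : Finset V} (he : e ∈ facesOfCard L 2) :
    Odd ((facesOfCard L 3).filter fun t => e ⊆ t ∧ P t).card ↔ e ∈ boundaryEdges L P := by
  have hsplit : ((facesOfCard L 3).filter fun t => e ⊆ t ∧ P t).card
      + ((facesOfCard L 3).filter fun t => e ⊆ t ∧ ¬P t).card = 2 := by
    rw [← filter_filter, ← filter_filter, card_filter_add_card_filter_not,
      hL.card_filter_triangles_supset he]
  have hpos : ∀ Q : Finset V → Prop, [DecidablePred Q] →
      (0 < ((facesOfCard L 3).filter fun t => e ⊆ t ∧ Q t).card ↔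
        ∃ t ∈ facesOfCard L 3, e ⊆ t ∧ Q t) := by
    simp [card_pos, Finset.Nonempty, and_assoc]
  rw [mem_boundaryEdges, ← hpos P, ← hpos (¬P ·), Nat.odd_iff]
  simp only [he, true_and]
  omega

/-- Double counting the pairs (edge at `x`, triangle with property `P` containing it): each
triangle at `x` contains two edges at `x`. -/
lemma IsClosed2Mfd.even_card_boundaryEdges_filter_mem (hL : IsClosed2Mfd L)
    (P : Finset V → Prop) (x : V) : Even ((boundaryEdges L P).filter (x ∈ ·)).card := by
  classical
  set E := (facesOfCard L 2).filter (x ∈ ·)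
  have hdc := sum_card_bipartiteAbove_eq_sum_card_bipartiteBelow (s := E)
    (t := (facesOfCard L 3).filter P) (fun e t => e ⊆ t)
  simp only [bipartiteAbove, bipartiteBelow] at hdc
  have heven : Even (∑ e ∈ E, (((facesOfCard L 3).filter P).filter (e ⊆ ·)).card) := by
    rw [hdc]
    refine even_sum _ fun t ht => ?_
    obtain ⟨htL, ht3⟩ := mem_facesOfCard.1 (mem_filter.1 ht).1
    have hEt : E.filter (· ⊆ t) = (t.powersetCard 2).filter ({x} ⊆ ·) := by
      rw [← hL.1.filter_facesOfCard_subset htL two_pos, filter_comm]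
      simp [filter_filter]
    rw [hEt]
    by_cases hxt : x ∈ t
    · rw [card_filter_powersetCard_subset _ _ _ (singleton_subset_iff.2 hxt) (by simp), ht3,
        card_singleton]
      decide
    · rw [filter_eq_empty_iff.2 fun s hs hxs =>
        hxt ((mem_powersetCard.1 hs).1 (hxs (mem_singleton_self x)))]
      simp
  rw [even_sum_iff_even_card_odd] at heven
  convert heven using 2
  ext e
  simp only [mem_filter, E, filter_filter, and_comm (a := P _)]
  by_cases he : e ∈ facesOfCard L 2
  · rw [← hL.odd_card_iff_mem_boundaryEdges P he]
    tauto
  · have : e ∉ boundaryEdges L P := fun h => he (mem_boundaryEdges.1 h).1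
    tauto

lemma IsClosed2Mfd.connected_dualGraph (hL : IsClosed2Mfd L) (hconn : ComplexConnected L)
    (hF : IsGradedForest F) : (dualGraph L F).Connected := by
  obtain ⟨t₀, ht₀, ht₀3⟩ := hL.2.2.1
  have ht₀' : t₀ ∈ facesOfCard L 3 := mem_facesOfCard.2 ⟨ht₀, ht₀3⟩
  refine (SimpleGraph.connected_iff_exists_forall_reachable _).2 ⟨⟨t₀, ht₀'⟩, fun t => ?_⟩
  set P : Finset V → Prop := fun s => ∃ h : s ∈ facesOfCard L 3,
    (dualGraph L F).Reachable ⟨t₀, ht₀'⟩ ⟨s, h⟩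
  have hBF : boundaryEdges L P ⊆ F := by
    intro e he
    obtain ⟨he, ⟨s, hs, hes, hPs⟩, ⟨s', hs', hes', hPs'⟩⟩ := mem_boundaryEdges.1 he
    by_contra heF
    have hne : s ≠ s' := by rintro rfl; exact hPs' hPs
    have hinter := inter_eq_of_card_three (mem_facesOfCard.1 hs).2 (mem_facesOfCard.1 hs').2 hne
      (mem_facesOfCard.1 he).2 hes hes'
    obtain ⟨_, hreach⟩ := hPs
    refine hPs' ⟨hs', hreach.trans (SimpleGraph.Adj.reachable ?_)⟩
    exact ⟨fun h => hne (congrArg Subtype.val h), by rw [hinter]; exact (mem_facesOfCard.1 he).2,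
      by rwa [hinter]⟩
  have hB : boundaryEdges L P = ∅ := by
    by_contra h
    obtain ⟨x, hx⟩ := hF.exists_card_filter_mem_eq_one hBF (nonempty_iff_ne_empty.2 h)
    have := hL.even_card_boundaryEdges_filter_mem P x
    rw [hx] at this
    exact Nat.not_even_one this
  obtain ⟨_, hreach⟩ := (hL.iff_of_connected hconn hB ht₀' t.2).1 ⟨ht₀', .refl _⟩
  exact hreach

lemma IsClosed2Mfd.card_edgeSet_dualGraph_le (hL : IsClosed2Mfd L) :
    Nat.card (dualGraph L F).edgeSet ≤ (facesOfCard L 2 \ F).card := by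
  rw [Nat.card_coe_set_eq, ← Set.ncard_coe_finset]
  refine Set.ncard_le_ncard_of_injOn
    (Sym2.lift ⟨fun t t' => t.1 ∩ t'.1, fun _ _ => inter_comm _ _⟩) ?_ ?_
  · refine Sym2.ind fun a b hab => ?_
    obtain ⟨-, hcard, hF⟩ := hab
    rw [Sym2.lift_mk, mem_coe, mem_sdiff, mem_facesOfCard]
    refine ⟨⟨hL.1.mem_of_subset (mem_facesOfCard.1 a.2).1 inter_subset_left ?_, hcard⟩, hF⟩
    rw [← card_pos, hcard]
    norm_num
  -- the two triangles on an edge are the only ones, so the edge determines the dual edge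
  · intro z hz z' hz' heq
    revert hz hz' heq
    refine Sym2.ind (fun a b => Sym2.ind (fun c d => ?_) z') z
    rintro ⟨hab, hcard, -⟩ ⟨hcd, -, -⟩ heq
    simp only [Sym2.lift_mk] at heq
    have he : a.1 ∩ b.1 ∈ facesOfCard L 2 := mem_facesOfCard.2
      ⟨hL.1.mem_of_subset (mem_facesOfCard.1 a.2).1 inter_subset_left
        (card_pos.1 (by rw [hcard]; norm_num)), hcard⟩
    have hT : (facesOfCard L 3).filter (a.1 ∩ b.1 ⊆ ·) = {a.1, b.1} := by
      refine (eq_of_subset_of_card_le ?_ ?_).symm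
      · simp [insert_subset_iff, a.2, b.2, inter_subset_left, inter_subset_right]
      · rw [hL.card_filter_triangles_supset he, card_pair (Subtype.coe_ne_coe.2 hab)]
    have hc : c.1 ∈ ({a.1, b.1} : Finset (Finset V)) := by
      rw [← hT, mem_filter, heq]; exact ⟨c.2, inter_subset_left⟩
    have hd : d.1 ∈ ({a.1, b.1} : Finset (Finset V)) := by
      rw [← hT, mem_filter, heq]; exact ⟨d.2, inter_subset_right⟩
    simp only [mem_insert, mem_singleton, ← Subtype.ext_iff] at hc hd
    rw [Sym2.eq_iff]
    grind

lemma IsClosed2Mfd.two_mul_card_vertSet_le (hL : IsClosed2Mfd L) (hconn : ComplexConnected L) :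
    2 * (vertSet L).card ≤ (facesOfCard L 3).card + 4 := by
  obtain ⟨t, ht, -⟩ := hL.2.2.1
  obtain ⟨v, hv⟩ := hL.1.1 t ht
  obtain ⟨F, hFL, hFcard, hF⟩ := hconn.exists_isGradedForest ⟨v, hL.1.mem_vertSet_of_mem ht hv⟩
  have hdual := (hL.connected_dualGraph hconn hF).card_vert_le_card_edgeSet_add_one
  rw [Nat.card_eq_fintype_card, Fintype.card_coe] at hdual
  have hedges := hL.card_edgeSet_dualGraph_le (F := F)
  rw [card_sdiff_of_subset hFL] at hedges
  have h32 := hL.three_mul_card_triangles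
  have hFe := card_le_card hFL
  omega

end Surface

section TwelveVertices

variable {M : Finset (Finset (Fin 12))}

lemma card_facesOfCard_four (hM : IsWPM 6 M) (hcomp : Complementarity M) :
    (facesOfCard M 4).card = 495 := by
  have h := hcomp.card_facesOfCard_add (k := 4) (by norm_num) (by simp)
  rw [Fintype.card_fin, show 12 - 4 = 8 from rfl,
    hM.2.1.facesOfCard_eq_empty (k := 8) (by norm_num)] at h
  simpa [Nat.choose] using h

lemma card_facesOfCard_six (hcomp : Complementarity M) : (facesOfCard M 6).card = 462 := by
  have h := hcomp.card_facesOfCard_add (k := 6) (by norm_num) (by simp)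
  simp only [Fintype.card_fin] at h
  simp [Nat.choose] at h
  omega

lemma card_facets (hM : IsWPM 6 M) (hcomp : Complementarity M) :
    (facesOfCard M 7).card = 132 := by
  have h := hM.1.sum_card_filter_facesOfCard_supset (k := 6) (l := 7) (by norm_num)
  rw [sum_congr rfl (g := fun _ => 2) fun σ hσ => ?_, sum_const, card_facesOfCard_six hcomp] at h
  · simp [Nat.choose] at h
    omega
  · rw [mem_facesOfCard] at hσ
    rw [← hM.2.2.2 σ hσ.1 hσ.2, facesOfCard, filter_filter]

lemma card_facesOfCard_five (hM : IsWPM 6 M) (hcomp : Complementarity M) :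
    (facesOfCard M 5).card = 660 := by
  have h := hcomp.card_facesOfCard_add (k := 5) (by norm_num) (by simp)
  simp only [Fintype.card_fin] at h
  rw [show 12 - 5 = 7 from rfl, card_facets hM hcomp] at h
  simp [Nat.choose] at h
  omega

lemma sum_degFace (hM : IsWPM 6 M) (hcomp : Complementarity M) :
    ∑ σ ∈ facesOfCard M 4, degFace M σ = 3300 := by
  rw [sum_congr rfl fun σ hσ => by rw [hM.1.degFace_eq, (mem_facesOfCard.1 hσ).2],
    hM.1.sum_card_filter_facesOfCard_supset (by norm_num), card_facesOfCard_five hM hcomp]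
  rfl

lemma sum_card_triangles_lk (hM : IsWPM 6 M) (hcomp : Complementarity M) :
    ∑ σ ∈ facesOfCard M 4, (facesOfCard (lk M σ) 3).card = 4620 := by
  rw [sum_congr rfl fun σ hσ => by
      rw [hM.1.card_facesOfCard_lk σ (by norm_num), (mem_facesOfCard.1 hσ).2],
    hM.1.sum_card_filter_facesOfCard_supset (by norm_num), card_facets hM hcomp]
  rfl

end TwelveVertices

theorem stmt_11_general (M : Finset (Finset (Fin 12))) (hM : IsWPM 6 M)
    (hcomp : Complementarity M)
    (hlink : ∀ γ ∈ M, γ.card = 4 →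
      IsClosed2Mfd (lk M γ) ∧ ComplexConnected (lk M γ))
    (c : ℕ → ℕ)
    (hc : ∀ i, c i = (M.filter fun σ => σ.card = 4 ∧ degFace M σ = i).card) :
    (∑ i ∈ Finset.range 13, c i = 495) ∧
    (∑ i ∈ Finset.range 13, i * c i = 3300) ∧
    (∑ i ∈ Finset.range 13, ((2 * i : ℤ) - 4) * c i = 4620) ∧
    (∀ γ ∈ M, γ.card = 4 →
      ((lk M γ).filter fun t => t.card = 3).card = 2 * degFace M γ - 4 ∧
      eulerChar (lk M γ) = 2) := by
  have hdeg : ∀ σ ∈ facesOfCard M 4, degFace M σ ∈ range 13 := fun σ _ =>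
    mem_range.2 (Nat.lt_succ_of_le ((card_le_univ _).trans_eq (Fintype.card_fin 12)))
  have hfiber : ∀ i, c i = ((facesOfCard M 4).filter (degFace M · = i)).card := by
    simp [hc, facesOfCard, filter_filter]
  have hsum1 : ∑ i ∈ range 13, c i = 495 := by
    rw [← card_facesOfCard_four hM hcomp, card_eq_sum_card_fiberwise hdeg]
    simp only [hfiber]
  have hsum2 : ∑ i ∈ range 13, i * c i = 3300 := by
    rw [← sum_degFace hM hcomp, ← sum_fiberwise_of_maps_to hdeg]
    refine sum_congr rfl fun i _ => ?_
    rw [hfiber, sum_congr rfl fun σ hσ => (mem_filter.1 hσ).2, sum_const, smul_eq_mul, mul_comm]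
  have hlink' : ∀ σ ∈ facesOfCard M 4, IsClosed2Mfd (lk M σ) ∧ ComplexConnected (lk M σ) :=
    fun σ hσ => hlink σ (mem_facesOfCard.1 hσ).1 (mem_facesOfCard.1 hσ).2
  have htri : ∀ σ ∈ facesOfCard M 4, 2 * degFace M σ = (facesOfCard (lk M σ) 3).card + 4 := by
    refine (sum_eq_sum_iff_of_le (f := fun σ => 2 * degFace M σ) fun σ hσ =>
      (hlink' σ hσ).1.two_mul_card_vertSet_le (hlink' σ hσ).2).1 ?_
    rw [← mul_sum, sum_add_distrib, sum_degFace hM hcomp, sum_card_triangles_lk hM hcomp]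
    simp [card_facesOfCard_four hM hcomp]
  refine ⟨hsum1, hsum2, ?_, fun γ hγ hγ4 => ?_⟩
  · have h1 : ∑ i ∈ range 13, (c i : ℤ) = 495 := by exact_mod_cast hsum1
    have h2 : ∑ i ∈ range 13, (i * c i : ℤ) = 3300 := by exact_mod_cast hsum2
    simp only [sub_mul, sum_sub_distrib, mul_assoc, ← mul_sum, h1, h2]
    norm_num
  · have hγ' : γ ∈ facesOfCard M 4 := mem_facesOfCard.2 ⟨hγ, hγ4⟩
    have h := htri γ hγ'
    refine ⟨show (facesOfCard (lk M γ) 3).card = _ by omega,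
      (hlink' γ hγ').1.eulerChar_eq_two (by rw [degFace] at h; omega)⟩

/-- Lemma 4.5: suppose every 4-element face (tetrahedron) of a
12-vertex 6-dimensional weak pseudomanifold `M` with complementarity has as its
link a connected combinatorial 2-manifold. With `c i` the number of 4-element faces
of degree `i`, the counting `Σ cᵢ = 495`, `Σ i·cᵢ = 3300` and `Σ (2i-4)cᵢ ≤ 4620`
holds with equality in the last; hence the link of each 4-element face has exactly
`2·(deg - 2)` triangles, i.e. Euler characteristic 2. -/
theorem stmt_11 (M : Finset (Finset (Fin 12))) (hM : IsWPM 6 M)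
    (hvert : ∀ v : Fin 12, ({v} : Finset (Fin 12)) ∈ M)
    (hcomp : Complementarity M)
    (hlink : ∀ γ ∈ M, γ.card = 4 →
      IsClosed2Mfd (lk M γ) ∧ ComplexConnected (lk M γ))
    (c : ℕ → ℕ)
    (hc : ∀ i, c i = (M.filter fun σ => σ.card = 4 ∧ degFace M σ = i).card) :
    (∑ i ∈ Finset.range 13, c i = 495) ∧
    (∑ i ∈ Finset.range 13, i * c i = 3300) ∧
    (∑ i ∈ Finset.range 13, ((2 * i : ℤ) - 4) * c i = 4620) ∧
    (∀ γ ∈ M, γ.card = 4 →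
      ((lk M γ).filter fun t => t.card = 3).card = 2 * degFace M γ - 4 ∧
      eulerChar (lk M γ) = 2) :=
  stmt_11_general M hM hcomp hlink c hc
end

section
/- Let M be a 12-vertex 6-dimensional weak pseudomanifold with complementarity and let δ be a 3-element face of M whose link L is 2-neighbourly (every pair of the 9 vertices of L forms an edge of L). Then L has no induced subcomplex isomorphic to the boundary of the tetrahedron S^2_4. -/
open Finset

/-- Lemma 4.7: in a 12-vertex 6-dimensional weak pseudomanifold `M`
with complementarity, if `δ` is a 3-element face whose link `L` is 2-neighbourly
(every pair of vertices of `L` is an edge of `L`), then `L` has no induced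
subcomplex isomorphic to the standard 2-sphere `S²₄`. -/
theorem stmt_13 (M : Finset (Finset (Fin 12))) (hM : IsWPM 6 M)
    (hvert : ∀ v : Fin 12, ({v} : Finset (Fin 12)) ∈ M)
    (hcomp : Complementarity M)
    (δ : Finset (Fin 12)) (hδ : δ ∈ M) (hδcard : δ.card = 3)
    (hnbr : ∀ u ∈ vertSet (lk M δ), ∀ v ∈ vertSet (lk M δ), u ≠ v →
      ({u, v} : Finset (Fin 12)) ∈ lk M δ) :
    ¬ ∃ X : Finset (Fin 12), X.card = 4 ∧
        ((lk M δ).filter fun s => s ⊆ X) = stdS2 X := by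
  obtain ⟨⟨hne, hdc⟩, ⟨hcard7, hpure⟩, _hex, hridge⟩ := hM
  rintro ⟨X, hX4, hind⟩
  -- every nonempty set of card ≤ 4 is a face
  have hsmall : ∀ A : Finset (Fin 12), A.Nonempty → A.card ≤ 4 → A ∈ M := by
    intro A hA hAc
    have hcc : Aᶜ.card = 12 - A.card := by
      rw [Finset.card_compl]; simp
    have hAcne : Aᶜ.Nonempty := by
      rw [← Finset.card_pos, hcc]; omega
    refine (hcomp A hA hAcne).mpr ?_
    intro hmem
    have := hcard7 _ hmem
    omega
  have hlk_mem : ∀ s : Finset (Fin 12), s ∈ lk M δ ↔ s ∈ M ∧ δ ∩ s = ∅ ∧ δ ∪ s ∈ M := by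
    intro s; simp [lk, Finset.mem_filter]
  have hstd1 : ∀ s : Finset (Fin 12), s ⊆ X → s.Nonempty → s ≠ X → δ ∪ s ∈ M := by
    intro s h1 h2 h3
    have hs : s ∈ stdS2 X := by
      simp only [stdS2, Finset.mem_filter, Finset.mem_powerset]
      exact ⟨h1, h2, h3⟩
    rw [← hind, Finset.mem_filter] at hs
    exact ((hlk_mem s).mp hs.1).2.2
  have hdisjδX : Disjoint δ X := by
    rw [Finset.disjoint_right]
    intro v hvX hvδ
    have hs : ({v} : Finset (Fin 12)) ∈ stdS2 X := by
      simp only [stdS2, Finset.mem_filter, Finset.mem_powerset]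
      refine ⟨Finset.singleton_subset_iff.mpr hvX, Finset.singleton_nonempty v, ?_⟩
      intro h
      rw [← h] at hX4
      simp at hX4
    rw [← hind, Finset.mem_filter] at hs
    have h2 := ((hlk_mem _).mp hs.1).2.1
    have : v ∈ δ ∩ {v} := Finset.mem_inter.mpr ⟨hvδ, Finset.mem_singleton_self v⟩
    rw [h2] at this
    exact absurd this (Finset.notMem_empty v)
  have hXne : X.Nonempty := by rw [← Finset.card_pos, hX4]; omega
  have hδX7 : (δ ∪ X).card = 7 := by
    rw [Finset.card_union_of_disjoint hdisjδX, hδcard, hX4]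
  set Y : Finset (Fin 12) := (δ ∪ X)ᶜ with hYdef
  have hY5 : Y.card = 5 := by
    rw [hYdef, Finset.card_compl, hδX7]; simp
  have hδXne : (δ ∪ X).Nonempty := by rw [← Finset.card_pos, hδX7]; omega
  have hYne : Y.Nonempty := by rw [← Finset.card_pos, hY5]; omega
  -- δ ∪ X is not a face
  have hδXnotM : δ ∪ X ∉ M := by
    intro h
    have hXM : X ∈ M := hdc _ h X Finset.subset_union_right hXne
    have hXlk : X ∈ lk M δ := (hlk_mem X).mpr
      ⟨hXM, Finset.disjoint_iff_inter_eq_empty.mp hdisjδX, h⟩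
    have : X ∈ stdS2 X := by
      rw [← hind, Finset.mem_filter]; exact ⟨hXlk, Finset.Subset.refl X⟩
    simp only [stdS2, Finset.mem_filter] at this
    exact this.2.2 rfl
  have hYM : Y ∈ M := by
    by_contra hY
    exact hδXnotM ((hcomp (δ ∪ X) hδXne hYne).mpr (by rwa [← hYdef]))
  -- membership in Y compl
  have hYmem : ∀ v : Fin 12, v ∈ Y ↔ v ∉ δ ∪ X := by
    intro v; rw [hYdef, Finset.mem_compl]
  -- facets containing Y avoid X
  have hC : ∀ γ ∈ M, γ.card = 7 → Y ⊆ γ → ∀ x ∈ X, x ∉ γ := by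
    intro γ hγ hγ7 hYγ x hx hxγ
    have hτ : δ ∪ X.erase x ∈ M := by
      apply hstd1
      · exact Finset.erase_subset x X
      · rw [← Finset.card_pos, Finset.card_erase_of_mem hx, hX4]; omega
      · intro h
        have := h ▸ Finset.notMem_erase x X
        exact this hx
    have hγcne : γᶜ.Nonempty := by
      rw [← Finset.card_pos, Finset.card_compl, hγ7]; simp
    have hsub : γᶜ ⊆ δ ∪ X.erase x := by
      intro v hv
      rw [Finset.mem_compl] at hv
      have hvY : v ∉ Y := fun h => hv (hYγ h)
      rw [hYmem, not_not, Finset.mem_union] at hvY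
      rcases hvY with h | h
      · exact Finset.mem_union_left _ h
      · refine Finset.mem_union_right _ (Finset.mem_erase.mpr ⟨?_, h⟩)
        rintro rfl; exact hv hxγ
    have hγne : γ.Nonempty := by rw [← Finset.card_pos, hγ7]; omega
    exact (hcomp γ hγne hγcne).mp hγ (hdc _ hτ γᶜ hsub hγcne)
  -- get a facet over Y
  obtain ⟨γ₀, hγ₀M, hYγ₀, hγ₀7⟩ := hpure Y hYM
  have hD₀δ : γ₀ \ Y ⊆ δ := by
    intro d hd
    rw [Finset.mem_sdiff] at hd
    have := hd.2
    rw [hYmem, not_not, Finset.mem_union] at this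
    rcases this with h | h
    · exact h
    · exact absurd hd.1 (hC γ₀ hγ₀M hγ₀7 hYγ₀ d h)
  have hD₀2 : (γ₀ \ Y).card = 2 := by
    rw [Finset.card_sdiff_of_subset hYγ₀, hγ₀7, hY5]
  have hδY : ∀ v ∈ δ, v ∉ Y := by
    intro v hv h
    rw [hYmem] at h
    exact h (Finset.mem_union_left _ hv)
  -- the sub-lemma: extend any facet over Y
  have hSub : ∀ p ∈ γ₀ \ Y, ∀ d ∈ δ, d ≠ p → (Y ∪ {p}) ∪ {d} ∈ M := by
    intro p hp d hd hdp
    have hpδ : p ∈ δ := hD₀δ hp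
    have hpγ₀ : p ∈ γ₀ := (Finset.mem_sdiff.mp hp).1
    have hpY : p ∉ Y := hδY p hpδ
    have hRs : Y ∪ {p} ⊆ γ₀ :=
      Finset.union_subset hYγ₀ (Finset.singleton_subset_iff.mpr hpγ₀)
    have hR6 : (Y ∪ {p}).card = 6 := by
      rw [Finset.card_union_of_disjoint (Finset.disjoint_singleton_right.mpr hpY), hY5]
      simp
    have hRM : Y ∪ {p} ∈ M := hdc γ₀ hγ₀M _ hRs (hYne.mono Finset.subset_union_left)
    have hS2 := hridge _ hRM hR6
    set S := M.filter (fun γ => γ.card = 6 + 1 ∧ Y ∪ {p} ⊆ γ) with hSdef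
    set T := (δ \ {p}).image (fun w => (Y ∪ {p}) ∪ {w}) with hTdef
    have hST : S ⊆ T := by
      intro γ hγS
      rw [hSdef, Finset.mem_filter] at hγS
      obtain ⟨hγM, hγ7, hRγ⟩ := hγS
      have h1 : (γ \ (Y ∪ {p})).card = 1 := by
        rw [Finset.card_sdiff_of_subset hRγ, hγ7, hR6]
      obtain ⟨w, hw⟩ := Finset.card_eq_one.mp h1
      have hwmem : w ∈ γ \ (Y ∪ {p}) := hw ▸ Finset.mem_singleton_self w
      rw [Finset.mem_sdiff] at hwmem
      have hwX : w ∉ X := fun h => hC γ hγM hγ7 (Finset.subset_union_left.trans hRγ) w h hwmem.1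
      have hwδ : w ∈ δ := by
        have hwY : w ∉ Y := fun h => hwmem.2 (Finset.mem_union_left _ h)
        rw [hYmem, not_not, Finset.mem_union] at hwY
        rcases hwY with h | h
        · exact h
        · exact absurd h hwX
      have hwp : w ≠ p := by
        intro h; exact hwmem.2 (Finset.mem_union_right _ (by simp [h]))
      have hγeq : γ = (Y ∪ {p}) ∪ {w} := by
        apply (Finset.eq_of_subset_of_card_le ?_ ?_).symm
        · apply Finset.union_subset hRγ (Finset.singleton_subset_iff.mpr hwmem.1)
        · rw [Finset.card_union_of_disjoint (Finset.disjoint_singleton_right.mpr hwmem.2),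
            hR6, hγ7]
          simp
      rw [hTdef, Finset.mem_image]
      exact ⟨w, Finset.mem_sdiff.mpr ⟨hwδ, by simp [hwp]⟩, hγeq.symm⟩
    have hTcard : T.card ≤ 2 := by
      refine le_trans Finset.card_image_le ?_
      rw [Finset.card_sdiff_of_subset (Finset.singleton_subset_iff.mpr hpδ), hδcard]
      simp
    have hSeq : S = T := Finset.eq_of_subset_of_card_le hST (by rw [hS2]; exact hTcard)
    have hdT : (Y ∪ {p}) ∪ {d} ∈ T := by
      rw [hTdef, Finset.mem_image]
      exact ⟨d, Finset.mem_sdiff.mpr ⟨hd, by simp [hdp]⟩, rfl⟩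
    rw [← hSeq, hSdef, Finset.mem_filter] at hdT
    exact hdT.1
  -- all three Y ∪ (δ \ {t}) are faces
  have hE : ∀ t ∈ δ, Y ∪ (δ \ {t}) ∈ M := by
    intro t ht
    obtain ⟨p, hpD₀, hpt⟩ : ∃ p ∈ γ₀ \ Y, p ≠ t := by
      obtain ⟨a, b, hab, hD⟩ := Finset.card_eq_two.mp hD₀2
      by_cases h : a = t
      · exact ⟨b, by simp [hD], fun hbt => hab (h.trans hbt.symm)⟩
      · exact ⟨a, by simp [hD], h⟩
    have hpδ : p ∈ δ := hD₀δ hpD₀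
    have hpmem : p ∈ δ \ {t} := Finset.mem_sdiff.mpr ⟨hpδ, by simp [hpt]⟩
    have hcardδt : (δ \ {t}).card = 2 := by
      rw [Finset.card_sdiff_of_subset (Finset.singleton_subset_iff.mpr ht), hδcard]
      simp
    obtain ⟨d, hd⟩ : ∃ d, (δ \ {t}).erase p = {d} := by
      apply Finset.card_eq_one.mp
      rw [Finset.card_erase_of_mem hpmem, hcardδt]
    have hdmem : d ∈ (δ \ {t}).erase p := hd ▸ Finset.mem_singleton_self d
    have hdp : d ≠ p := (Finset.mem_erase.mp hdmem).1
    have hdδt : d ∈ δ \ {t} := (Finset.mem_erase.mp hdmem).2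
    have hδt : δ \ {t} = {p, d} := by
      apply (Finset.eq_of_subset_of_card_le ?_ ?_).symm
      · intro v hv
        rw [Finset.mem_insert, Finset.mem_singleton] at hv
        rcases hv with rfl | rfl
        · exact hpmem
        · exact hdδt
      · rw [hcardδt, Finset.card_insert_of_notMem (by simp [hdp.symm] : p ∉ ({d} : Finset (Fin 12)))]
        simp
    have hpair : Y ∪ ({p, d} : Finset (Fin 12)) = (Y ∪ {p}) ∪ {d} := by
      ext v; simp [Finset.mem_union, Finset.mem_insert]
    rw [hδt, hpair]
    exact hSub p hpD₀ d (Finset.mem_sdiff.mp hdδt).1 hdp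
  -- final contradiction via a facet over X
  have hXM : X ∈ M := hsmall X hXne (le_of_eq hX4)
  obtain ⟨γ, hγM, hXγ, hγ7⟩ := hpure X hXM
  have hγne : γ.Nonempty := by rw [← Finset.card_pos, hγ7]; omega
  have hγc5 : γᶜ.card = 5 := by rw [Finset.card_compl, hγ7]; simp
  have hγcne : γᶜ.Nonempty := by rw [← Finset.card_pos, hγc5]; omega
  have hnotin : γᶜ ∉ M := (hcomp γ hγne hγcne).mp hγM
  by_cases hδγ : ∃ t ∈ δ, t ∈ γ
  · obtain ⟨t, ht, htγ⟩ := hδγ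
    have hFt := hE t ht
    apply hnotin
    refine hdc _ hFt γᶜ ?_ hγcne
    intro v hv
    rw [Finset.mem_compl] at hv
    rw [Finset.mem_union, Finset.mem_sdiff]
    by_cases hvY : v ∈ Y
    · exact Or.inl hvY
    · rw [hYmem, not_not, Finset.mem_union] at hvY
      rcases hvY with h | h
      · refine Or.inr ⟨h, ?_⟩
        rw [Finset.mem_singleton]
        rintro rfl; exact hv htγ
      · exact absurd (hXγ h) hv
  · push_neg at hδγ
    have hδsub : δ ⊆ γᶜ := fun v hv => Finset.mem_compl.mpr (hδγ v hv)
    have h2 : (γᶜ \ δ).card = 2 := by rw [Finset.card_sdiff_of_subset hδsub, hγc5, hδcard]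
    obtain ⟨u, w, huw, heq⟩ := Finset.card_eq_two.mp h2
    have humem : u ∈ γᶜ \ δ := by rw [heq]; simp
    have hwmem : w ∈ γᶜ \ δ := by rw [heq]; simp
    have hvert' : ∀ v : Fin 12, v ∉ δ → v ∈ vertSet (lk M δ) := by
      intro v hv
      simp only [vertSet, Finset.mem_filter, Finset.mem_univ, true_and]
      refine (hlk_mem _).mpr ⟨hvert v, ?_, ?_⟩
      · rw [Finset.inter_singleton_of_notMem hv]
      · apply hsmall
        · exact Finset.Nonempty.mono Finset.subset_union_right (Finset.singleton_nonempty v)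
        · calc (δ ∪ {v}).card ≤ δ.card + ({v} : Finset (Fin 12)).card := Finset.card_union_le _ _
            _ ≤ 4 := by rw [hδcard]; simp
    have hedge := hnbr u (hvert' u (Finset.mem_sdiff.mp humem).2)
      w (hvert' w (Finset.mem_sdiff.mp hwmem).2) huw
    have hface : δ ∪ {u, w} ∈ M := ((hlk_mem _).mp hedge).2.2
    apply hnotin
    have heq2 : γᶜ = δ ∪ {u, w} := by
      rw [← heq, Finset.union_sdiff_of_subset hδsub]
    rw [heq2]; exact hface
end

section
/- A 12-vertex 6-dimensional weak pseudomanifold with complementarity is strongly connected (i.e., is a pseudomanifold): any two facets intersect in at least 3 vertices, and (assuming links of 3-element faces are strongly connected) the facet adjacency graph is connected. -/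
/-!
Complementarity forbids two faces from covering the vertex set: if `α ∪ β = V` then the
complement of `α` lies in `β`, so both `α` and its complement would be faces. Hence two facets
of a 6-dimensional complex on 12 vertices share at least `7 + 7 + 1 - 12 = 3` vertices, and a
path of facets between them is obtained by lifting a path in the link of a common 3-face.
-/

open Finset

/-- `K` is strongly connected in dimension `d`: any two facets (faces with `d+1`
vertices) are joined by a path of facets in which consecutive facets share a
`(d-1)`-face (i.e. meet in `d` vertices). -/
def StronglyConnected {V : Type} [DecidableEq V] (d : ℕ) (K : Finset (Finset V)) : Prop :=
  ∀ α ∈ K, α.card = d + 1 → ∀ β ∈ K, β.card = d + 1 →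
    Relation.ReflTransGen
      (fun a b : Finset V => a ∈ K ∧ b ∈ K ∧ a.card = d + 1 ∧ b.card = d + 1 ∧
        (a ∩ b).card = d) α β

variable {V : Type} [DecidableEq V]

section Complementarity

variable [Fintype V] {K : Finset (Finset V)} {α β : Finset V}

theorem union_ne_univ_of_complementarity (hK : IsComplex K) (hc : Complementarity K)
    (hα : α ∈ K) (hαV : α.card < Fintype.card V) (hβ : β ∈ K) : α ∪ β ≠ univ := by
  intro hcover
  have hcompl_sub : αᶜ ⊆ β := by
    intro v hv
    have hv' : v ∈ α ∪ β := hcover ▸ mem_univ v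
    exact (mem_union.mp hv').resolve_left (mem_compl.mp hv)
  have hcompl_ne : αᶜ.Nonempty := by
    rw [← card_pos, card_compl]
    omega
  exact (hc α (hK.1 α hα) hcompl_ne).mp hα (hK.2 β hβ αᶜ hcompl_sub hcompl_ne)

theorem card_add_card_lt_card_add_card_inter (hK : IsComplex K) (hc : Complementarity K)
    (hα : α ∈ K) (hαV : α.card < Fintype.card V) (hβ : β ∈ K) :
    α.card + β.card < Fintype.card V + (α ∩ β).card := by
  have hlt : (α ∪ β).card < Fintype.card V :=
    (card_le_univ _).lt_of_ne
      fun h => union_ne_univ_of_complementarity hK hc hα hαV hβ (eq_univ_of_card _ h)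
  have := card_union_add_card_inter α β
  omega

end Complementarity

section Link

variable {K : Finset (Finset V)} {δ : Finset V}

def FacetAdj (d : ℕ) (K : Finset (Finset V)) (a b : Finset V) : Prop :=
  a ∈ K ∧ b ∈ K ∧ a.card = d + 1 ∧ b.card = d + 1 ∧ (a ∩ b).card = d

theorem sdiff_mem_lk (hK : IsComplex K) {γ : Finset V} (hγ : γ ∈ K) (hδγ : δ ⊆ γ)
    (hne : (γ \ δ).Nonempty) : γ \ δ ∈ lk K δ := by
  refine mem_filter.mpr ⟨hK.2 γ hγ _ sdiff_subset hne, ?_, ?_⟩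
  · exact disjoint_iff_inter_eq_empty.mp disjoint_sdiff
  · rwa [union_sdiff_of_subset hδγ]

theorem FacetAdj.union_of_lk {e : ℕ} {a b : Finset V} (h : FacetAdj e (lk K δ) a b) :
    FacetAdj (δ.card + e) K (δ ∪ a) (δ ∪ b) := by
  obtain ⟨ha, hb, ha_card, hb_card, hab_card⟩ := h
  obtain ⟨-, hδa, haK⟩ := mem_filter.mp ha
  obtain ⟨-, hδb, hbK⟩ := mem_filter.mp hb
  have hδa' : Disjoint δ a := disjoint_iff_inter_eq_empty.mpr hδa
  have hδb' : Disjoint δ b := disjoint_iff_inter_eq_empty.mpr hδb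
  refine ⟨haK, hbK, ?_, ?_, ?_⟩
  · rw [card_union_of_disjoint hδa', ha_card, add_assoc]
  · rw [card_union_of_disjoint hδb', hb_card, add_assoc]
  · rw [← union_inter_distrib_left,
      card_union_of_disjoint (hδa'.mono_right inter_subset_left), hab_card]

theorem stronglyConnected_of_lk (hK : IsComplex K) {k e : ℕ} (hk : 0 < k)
    (hmeet : ∀ α ∈ K, α.card = k + e + 1 → ∀ β ∈ K, β.card = k + e + 1 → k ≤ (α ∩ β).card)
    (hlink : ∀ δ ∈ K, δ.card = k → StronglyConnected e (lk K δ)) :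
    StronglyConnected (k + e) K := by
  intro α hα hα_card β hβ hβ_card
  obtain ⟨δ, hδ, hδ_card⟩ := exists_subset_card_eq (hmeet α hα hα_card β hβ hβ_card)
  have hδα : δ ⊆ α := hδ.trans inter_subset_left
  have hδβ : δ ⊆ β := hδ.trans inter_subset_right
  have hδK : δ ∈ K := hK.2 α hα δ hδα (card_pos.mp (hδ_card ▸ hk))
  have hcard_sdiff {γ : Finset V} (hδγ : δ ⊆ γ) (hγ_card : γ.card = k + e + 1) :
      (γ \ δ).card = e + 1 := by
    rw [card_sdiff_of_subset hδγ]
    omega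
  have hpath := hlink δ hδK hδ_card
    (α \ δ) (sdiff_mem_lk hK hα hδα (card_pos.mp (by rw [hcard_sdiff hδα hα_card]; omega)))
    (hcard_sdiff hδα hα_card)
    (β \ δ) (sdiff_mem_lk hK hβ hδβ (card_pos.mp (by rw [hcard_sdiff hδβ hβ_card]; omega)))
    (hcard_sdiff hδβ hβ_card)
  have hlift : Relation.ReflTransGen (FacetAdj (δ.card + e) K) (δ ∪ (α \ δ)) (δ ∪ (β \ δ)) :=
    hpath.lift (δ ∪ ·) fun _ _ h => FacetAdj.union_of_lk h
  rwa [union_sdiff_of_subset hδα, union_sdiff_of_subset hδβ, hδ_card] at hlift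

end Link

theorem stmt_14_general (M : Finset (Finset (Fin 12))) (hM : IsWPM 6 M)
    (hcomp : Complementarity M)
    (hlink : ∀ δ ∈ M, δ.card = 3 → StronglyConnected 3 (lk M δ)) :
    (∀ α ∈ M, α.card = 7 → ∀ β ∈ M, β.card = 7 → 3 ≤ (α ∩ β).card) ∧
    StronglyConnected 6 M := by
  have hmeet : ∀ α ∈ M, α.card = 7 → ∀ β ∈ M, β.card = 7 → 3 ≤ (α ∩ β).card := by
    intro α hα hα_card β hβ hβ_card
    have := card_add_card_lt_card_add_card_inter hM.1 hcomp hα (by simp [hα_card]) hβ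
    simp only [hα_card, hβ_card, Fintype.card_fin] at this
    omega
  exact ⟨hmeet, stronglyConnected_of_lk (k := 3) (e := 3) hM.1 (by norm_num) hmeet hlink⟩

/-- Lemma 4.9: a 12-vertex 6-dimensional weak pseudomanifold with
complementarity is a pseudomanifold: any two facets meet in at least 3 vertices,
and (given that links of 3-element faces are strongly connected) the facet
adjacency graph is connected. -/
theorem stmt_14 (M : Finset (Finset (Fin 12))) (hM : IsWPM 6 M)
    (hvert : ∀ v : Fin 12, ({v} : Finset (Fin 12)) ∈ M)
    (hcomp : Complementarity M)
    (hlink : ∀ δ ∈ M, δ.card = 3 → StronglyConnected 3 (lk M δ)) :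
    (∀ α ∈ M, α.card = 7 → ∀ β ∈ M, β.card = 7 → 3 ≤ (α ∩ β).card) ∧
    StronglyConnected 6 M :=
  stmt_14_general M hM hcomp hlink
end

section
/- Let M be a 12-vertex 6-dimensional weak pseudomanifold with complementarity (with 2-sphere links of 4-element faces as needed). Fix a facet α. Then the numbers of facets of M meeting α in exactly 3, 4, 5, 6 vertices are 36, 58, 30 and 7 respectively. -/
open Finset

/-!
Write `n k` for the number of facets meeting `α` in `k` vertices and `f m j` for the number of
`m`-element faces meeting `α` in `j` vertices. Three families of linear relations determine the
`n k`:
* complementarity matches the `m`-sets of type `j` that are not faces with the `(12 - m)`-faces of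
  type `7 - j`, so `f m j + f (12 - m) (7 - j) = C(7, j) C(5, m - j)`;
* every 6-face lies in exactly two facets, and a facet of type `k` has `k` six-faces of type
  `k - 1` and `7 - k` of type `k`, so `2 f 6 j = (j + 1) n (j + 1) + (7 - j) n j`;
* the link of each 4-subset `γ` of `α` is a 2-sphere, whose Euler characteristic counts the
  5-, 6- and 7-faces containing `γ`; summing `χ = 2` over the 35 such `γ` gives
  `∑ j, C(j, 4) (f 5 j - f 6 j + n j) = 70`.
Since `α` is a face, moreover `f m m = C(7, m)`.
-/

section

variable {V : Type} [DecidableEq V]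

def facesMeeting (K : Finset (Finset V)) (α : Finset V) (m j : ℕ) : Finset (Finset V) :=
  K.filter fun σ => #σ = m ∧ #(α ∩ σ) = j

theorem powersetCard_card_sub_one_eq_image_erase {β : Finset V} (hβ : β.Nonempty) :
    β.powersetCard (#β - 1) = β.image β.erase := by
  ext τ
  simp only [mem_powersetCard, mem_image]
  constructor
  · rintro ⟨hτβ, hτ⟩
    obtain ⟨v, hv⟩ := card_eq_one.1 (show #(β \ τ) = 1 by
      rw [card_sdiff_of_subset hτβ, hτ]; have := hβ.card_pos; omega)
    refine ⟨v, (mem_sdiff.1 (hv ▸ mem_singleton_self v)).1, ?_⟩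
    rw [← sdiff_singleton_eq_erase, ← hv, Finset.sdiff_sdiff_eq_self hτβ]
  · rintro ⟨v, hv, rfl⟩
    exact ⟨erase_subset v β, card_erase_of_mem hv⟩

theorem card_powersetCard_card_sub_one_filter_card_inter (α : Finset V) {β : Finset V}
    (hβ : β.Nonempty) (j : ℕ) :
    #((β.powersetCard (#β - 1)).filter fun τ => #(α ∩ τ) = j) =
      (if #(α ∩ β) = j + 1 then j + 1 else 0) + (if #(α ∩ β) = j then #β - j else 0) := by
  rw [powersetCard_card_sub_one_eq_image_erase hβ, filter_image,
    card_image_of_injOn ((erase_injOn β).mono (filter_subset _ _)),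
    ← card_filter_add_card_filter_not (· ∈ α), filter_filter, filter_filter]
  congr 1
  · have : {v ∈ β | #(α ∩ β.erase v) = j ∧ v ∈ α} = {_v ∈ α ∩ β | #(α ∩ β) = j + 1} := by
      ext v
      simp only [mem_filter, mem_inter, inter_erase]
      constructor
      · rintro ⟨hvβ, hj, hvα⟩
        rw [card_erase_of_mem (mem_inter.2 ⟨hvα, hvβ⟩)] at hj
        have := card_pos.2 ⟨v, mem_inter.2 ⟨hvα, hvβ⟩⟩
        exact ⟨⟨hvα, hvβ⟩, by omega⟩
      · rintro ⟨⟨hvα, hvβ⟩, hj⟩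
        rw [card_erase_of_mem (mem_inter.2 ⟨hvα, hvβ⟩)]
        exact ⟨hvβ, by omega, hvα⟩
    rw [this, filter_const]
    split_ifs with h <;> simp [h]
  · have : {v ∈ β | #(α ∩ β.erase v) = j ∧ v ∉ α} = {_v ∈ β \ α | #(α ∩ β) = j} := by
      ext v
      simp only [mem_filter, mem_sdiff, inter_erase]
      constructor
      · rintro ⟨hvβ, hj, hvα⟩
        rw [erase_eq_of_notMem (fun h => hvα (mem_inter.1 h).1)] at hj
        exact ⟨⟨hvβ, hvα⟩, hj⟩
      · rintro ⟨⟨hvβ, hvα⟩, hj⟩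
        rw [erase_eq_of_notMem (fun h => hvα (mem_inter.1 h).1)]
        exact ⟨hvβ, hj, hvα⟩
    rw [this, filter_const]
    split_ifs with h
    · rw [card_sdiff, h]
    · rfl

theorem card_filter_powersetCard_card_inter [Fintype V] (α : Finset V) {m j : ℕ} (hj : j ≤ m) :
    #((univ.powersetCard m).filter fun s => #(α ∩ s) = j) =
      (#α).choose j * (#αᶜ).choose (m - j) := by
  rw [← card_powersetCard j α, ← card_powersetCard (m - j) αᶜ, ← card_product]
  have hsplit : ∀ A B : Finset V, A ⊆ α → B ⊆ αᶜ → α ∩ (A ∪ B) = A ∧ (A ∪ B) \ α = B := by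
    intro A B hA hB
    have hαB : Disjoint α B := disjoint_compl_right.mono_right hB
    constructor
    · rw [inter_union_distrib_left, inter_eq_right.2 hA, disjoint_iff_inter_eq_empty.1 hαB,
        union_empty]
    · rw [union_sdiff_distrib, sdiff_eq_empty_iff_subset.2 hA, empty_union,
        sdiff_eq_self_of_disjoint hαB.symm]
  refine card_nbij' (fun s => (α ∩ s, s \ α)) (fun p => p.1 ∪ p.2) ?_ ?_ ?_ ?_
  · intro s hs
    simp only [mem_coe, mem_filter, mem_powersetCard, subset_univ, true_and] at hs
    simp only [coe_product, Set.mem_prod, mem_coe, mem_powersetCard, inter_subset_left, true_and]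
    have := card_inter_add_card_sdiff s α
    rw [inter_comm] at this
    exact ⟨hs.2, fun x hx => mem_compl.2 (mem_sdiff.1 hx).2, by omega⟩
  · rintro ⟨A, B⟩ h
    simp only [coe_product, Set.mem_prod, mem_coe, mem_powersetCard] at h
    obtain ⟨⟨hA, hAc⟩, hB, hBc⟩ := h
    simp only [mem_coe, mem_filter, mem_powersetCard, subset_univ, true_and]
    rw [(hsplit A B hA hB).1, card_union_of_disjoint (disjoint_compl_right.mono hA hB), hAc, hBc]
    exact ⟨by omega, rfl⟩
  · intro s _
    exact (congrArg (· ∪ s \ α) (inter_comm α s)).trans (sup_inf_sdiff s α)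
  · rintro ⟨A, B⟩ h
    simp only [coe_product, Set.mem_prod, mem_coe, mem_powersetCard] at h
    exact Prod.ext (hsplit A B h.1.1 h.2.1).1 (hsplit A B h.1.1 h.2.1).2

variable {K : Finset (Finset V)} {α : Finset V}

theorem facesMeeting_self (hK : IsComplex K) (hα : α ∈ K) {m : ℕ} (hm : 0 < m) :
    facesMeeting K α m m = α.powersetCard m := by
  ext σ
  simp only [facesMeeting, mem_filter, mem_powersetCard]
  refine ⟨fun ⟨_, hσ, hασ⟩ => ⟨?_, hσ⟩, fun ⟨hσα, hσ⟩ => ⟨?_, hσ, ?_⟩⟩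
  · have := eq_of_subset_of_card_le (inter_subset_right (s₁ := α)) (hσ ▸ hασ.ge)
    exact this ▸ inter_subset_left
  · exact hK.2 α hα σ hσα (card_pos.1 (hσ ▸ hm))
  · rwa [inter_eq_right.2 hσα]

theorem facesMeeting_eq_empty_of_lt {m j : ℕ} (h : m < j) : facesMeeting K α m j = ∅ :=
  filter_false_of_mem fun _ _ ⟨hσ, hασ⟩ =>
    (hσ ▸ hασ ▸ h).not_ge (card_le_card inter_subset_right)

theorem card_facesMeeting_add_card_facesMeeting_compl [Fintype V] (hc : Complementarity K)
    {m j : ℕ} (hm : 0 < m) (hmV : m < Fintype.card V) (hj : j ≤ #α) :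
    #(facesMeeting K α m j) + #(facesMeeting K α (Fintype.card V - m) (#α - j)) =
      #((univ.powersetCard m).filter fun s => #(α ∩ s) = j) := by
  have hcompl : ∀ s : Finset V, #(α ∩ sᶜ) = #α - #(α ∩ s) := fun s => by
    rw [← sdiff_eq_inter_compl, card_sdiff, inter_comm]
  conv_rhs => rw [← card_filter_add_card_filter_not (· ∈ K)]
  congr 1
  · congr 1
    ext s
    simp only [facesMeeting, mem_filter, mem_powersetCard, subset_univ, true_and]
    tauto
  · refine card_nbij' compl compl ?_ ?_ (fun s _ => compl_compl s) (fun s _ => compl_compl s)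
    · intro s hs
      simp only [facesMeeting, mem_coe, mem_filter] at hs ⊢
      obtain ⟨hsK, hs, hαs⟩ := hs
      have hsc : #sᶜ = m := by rw [card_compl, hs]; omega
      refine ⟨⟨mem_powersetCard.2 ⟨subset_univ _, hsc⟩, ?_⟩, fun hscK => ?_⟩
      · have := card_le_card (inter_subset_left (s₁ := α) (s₂ := s))
        rw [hcompl, hαs]; omega
      · exact (hc s (card_pos.1 (by omega)) (card_pos.1 (by omega))).1 hsK hscK
    · intro s hs
      simp only [facesMeeting, mem_coe, mem_filter, mem_powersetCard, subset_univ,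
        true_and] at hs ⊢
      obtain ⟨⟨hs, hαs⟩, hsK⟩ := hs
      have hsc : #sᶜ = Fintype.card V - m := by rw [card_compl, hs]
      refine ⟨?_, hsc, by rw [hcompl, hαs]⟩
      by_contra hscK
      exact hsK ((hc s (card_pos.1 (by omega)) (card_pos.1 (by omega))).2 hscK)

theorem card_facesMeeting_mul_two {d : ℕ} (hd : 0 < d) (hK : IsWPM d K) (α : Finset V)
    (j : ℕ) :
    #(facesMeeting K α d j) * 2 =
      #(facesMeeting K α (d + 1) (j + 1)) * (j + 1) +
        #(facesMeeting K α (d + 1) j) * (d + 1 - j) := by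
  have hcount := sum_card_bipartiteAbove_eq_sum_card_bipartiteBelow
    (s := facesMeeting K α d j) (t := K.filter (#· = d + 1)) (r := (· ⊆ ·))
  have hridge : ∀ τ ∈ facesMeeting K α d j,
      #((K.filter (#· = d + 1)).bipartiteAbove (· ⊆ ·) τ) = 2 := fun τ hτ => by
    obtain ⟨hτK, hτ, -⟩ := mem_filter.1 hτ
    rw [bipartiteAbove, filter_filter, ← hK.2.2.2 τ hτK hτ]
  have hfacet : ∀ β ∈ K.filter (#· = d + 1),
      #((facesMeeting K α d j).bipartiteBelow (· ⊆ ·) β) =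
        (if #(α ∩ β) = j + 1 then j + 1 else 0) + (if #(α ∩ β) = j then d + 1 - j else 0) :=
    fun β hβ => by
    obtain ⟨hβK, hβ⟩ := mem_filter.1 hβ
    have : (facesMeeting K α d j).bipartiteBelow (· ⊆ ·) β =
        (β.powersetCard (#β - 1)).filter fun τ => #(α ∩ τ) = j := by
      ext τ
      simp only [bipartiteBelow, facesMeeting, mem_filter, mem_powersetCard, hβ,
        Nat.add_sub_cancel]
      exact ⟨fun ⟨⟨_, hτ, hj⟩, hτβ⟩ => ⟨⟨hτβ, hτ⟩, hj⟩,
        fun ⟨⟨hτβ, hτ⟩, hj⟩ => ⟨⟨hK.1.2 β hβK τ hτβ (card_pos.1 (hτ ▸ hd)), hτ, hj⟩, hτβ⟩⟩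
    rw [this, card_powersetCard_card_sub_one_filter_card_inter α (hK.1.1 β hβK), hβ]
  rw [sum_congr rfl hridge, sum_congr rfl hfacet, sum_add_distrib, ← sum_filter, ← sum_filter,
    sum_const, sum_const, sum_const, smul_eq_mul, smul_eq_mul, smul_eq_mul, filter_filter,
    filter_filter] at hcount
  exact hcount

theorem eulerChar_lk (hK : IsComplex K) (γ : Finset V) :
    eulerChar (lk K γ) = ∑ ρ ∈ K with γ ⊂ ρ, (-1 : ℤ) ^ (#ρ - #γ - 1) := by
  refine sum_nbij' (γ ∪ ·) (· \ γ) ?_ ?_ ?_ ?_ ?_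
  · intro τ hτ
    obtain ⟨hτK, hγτ, hγτK⟩ := mem_filter.1 hτ
    refine mem_filter.2 ⟨hγτK, Finset.ssubset_iff_subset_ne.2 ⟨subset_union_left, fun h => ?_⟩⟩
    obtain ⟨v, hv⟩ := hK.1 τ hτK
    have : v ∈ γ ∩ τ := mem_inter.2 ⟨h ▸ mem_union_right γ hv, hv⟩
    simp [hγτ] at this
  · intro ρ hρ
    obtain ⟨hρK, hγρ⟩ := mem_filter.1 hρ
    refine mem_filter.2 ⟨hK.2 ρ hρK _ sdiff_subset (sdiff_nonempty.2 hγρ.not_subset), ?_, ?_⟩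
    · exact inter_sdiff_self γ ρ
    · rwa [union_sdiff_of_subset hγρ.subset]
  · intro τ hτ
    exact union_sdiff_cancel_left (disjoint_iff_inter_eq_empty.2 (mem_filter.1 hτ).2.1)
  · intro ρ hρ
    exact union_sdiff_of_subset (mem_filter.1 hρ).2.subset
  · intro τ hτ
    rw [card_union_of_disjoint (disjoint_iff_inter_eq_empty.2 (mem_filter.1 hτ).2.1)]
    congr 1
    omega

theorem eulerChar_lk_eq_sum_range (hK : IsComplex K) {γ : Finset V} {r : ℕ}
    (hKr : ∀ σ ∈ K, #σ ≤ #γ + r) :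
    eulerChar (lk K γ) =
      ∑ i ∈ range r, (-1 : ℤ) ^ i * #(K.filter fun ρ => #ρ = #γ + i + 1 ∧ γ ⊆ ρ) := by
  rw [eulerChar_lk hK, ← sum_fiberwise_of_maps_to (g := fun ρ => #ρ - #γ - 1) (t := range r)]
  · refine sum_congr rfl fun i _ => ?_
    rw [sum_congr rfl fun ρ hρ => by rw [(mem_filter.1 hρ).2], sum_const, nsmul_eq_mul, mul_comm,
      filter_filter]
    congr 3
    ext ρ
    simp only [mem_filter, and_congr_right_iff]
    refine fun _ => ⟨fun ⟨hγρ, hi⟩ => ⟨?_, hγρ.subset⟩, fun ⟨hρ, hγρ⟩ => ⟨?_, by omega⟩⟩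
    · have := card_lt_card hγρ
      omega
    · exact Finset.ssubset_iff_subset_ne.2 ⟨hγρ, fun h => by rw [h] at hρ; omega⟩
  · intro ρ hρ
    obtain ⟨hρK, hγρ⟩ := mem_filter.1 hρ
    have := card_lt_card hγρ
    have := hKr ρ hρK
    simp only [mem_range]
    omega

theorem sum_powersetCard_card_filter_superset (α : Finset V) (r m : ℕ) :
    ∑ γ ∈ α.powersetCard r, #(K.filter fun ρ => #ρ = m ∧ γ ⊆ ρ) =
      ∑ j ∈ range (#α + 1), #(facesMeeting K α m j) * j.choose r := by
  have hcount := sum_card_bipartiteAbove_eq_sum_card_bipartiteBelow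
    (s := α.powersetCard r) (t := K.filter (#· = m)) (r := (· ⊆ ·))
  have hsub : ∀ σ : Finset V,
      (α.powersetCard r).bipartiteBelow (· ⊆ ·) σ = (α ∩ σ).powersetCard r := fun σ => by
    ext γ
    simp only [bipartiteBelow, mem_filter, mem_powersetCard, subset_inter_iff]
    tauto
  simp only [bipartiteAbove, filter_filter, hsub, card_powersetCard] at hcount
  rw [hcount, ← sum_fiberwise_of_maps_to (g := fun σ => #(α ∩ σ)) (t := range (#α + 1))]
  · refine sum_congr rfl fun j _ => ?_
    rw [sum_congr rfl fun σ hσ => by rw [(mem_filter.1 hσ).2], sum_const, smul_eq_mul,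
      filter_filter]
    rfl
  · exact fun σ _ => mem_range.2 (Nat.lt_succ_of_le (card_le_card inter_subset_left))

theorem sum_eulerChar_lk_powersetCard (hK : IsComplex K) {r s : ℕ}
    (hKr : ∀ σ ∈ K, #σ ≤ r + s) (α : Finset V) :
    ∑ γ ∈ α.powersetCard r, eulerChar (lk K γ) =
      ∑ i ∈ range s, (-1 : ℤ) ^ i *
        ∑ j ∈ range (#α + 1), (#(facesMeeting K α (r + i + 1) j) * j.choose r : ℕ) := by
  have hlink : ∀ γ ∈ α.powersetCard r, eulerChar (lk K γ) =
      ∑ i ∈ range s, (-1 : ℤ) ^ i * #(K.filter fun ρ => #ρ = r + i + 1 ∧ γ ⊆ ρ) :=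
    fun γ hγ => by
    obtain ⟨-, rfl⟩ := mem_powersetCard.1 hγ
    exact eulerChar_lk_eq_sum_range hK hKr
  rw [sum_congr rfl hlink, sum_comm]
  refine sum_congr rfl fun i _ => ?_
  rw [← mul_sum, ← sum_powersetCard_card_filter_superset]
  push_cast
  rfl

end

theorem stmt_16_general (M : Finset (Finset (Fin 12))) (hM : IsWPM 6 M)
    (hcomp : Complementarity M)
    (hlink : ∀ γ ∈ M, γ.card = 4 → Is2Sphere (lk M γ))
    (α : Finset (Fin 12)) (hα : α ∈ M) (hαcard : α.card = 7) :
    (M.filter fun β => β.card = 7 ∧ (α ∩ β).card = 3).card = 36 ∧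
    (M.filter fun β => β.card = 7 ∧ (α ∩ β).card = 4).card = 58 ∧
    (M.filter fun β => β.card = 7 ∧ (α ∩ β).card = 5).card = 30 ∧
    (M.filter fun β => β.card = 7 ∧ (α ∩ β).card = 6).card = 7 := by
  show #(facesMeeting M α 7 3) = 36 ∧ #(facesMeeting M α 7 4) = 58 ∧
    #(facesMeeting M α 7 5) = 30 ∧ #(facesMeeting M α 7 6) = 7
  have hK := hM.1
  have hself : ∀ m, 0 < m → #(facesMeeting M α m m) = (7 : ℕ).choose m := fun m hm => by
    rw [facesMeeting_self hK hα hm, card_powersetCard, hαcard]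
  have hpair : ∀ m j, 0 < m → m < 12 → j ≤ m → j ≤ 7 →
      #(facesMeeting M α m j) + #(facesMeeting M α (12 - m) (7 - j)) =
        (7 : ℕ).choose j * (5 : ℕ).choose (m - j) := fun m j hm hm12 hjm hj7 => by
    have := card_facesMeeting_add_card_facesMeeting_compl hcomp (α := α) (j := j) hm
      (by simpa) (hαcard ▸ hj7)
    rwa [card_filter_powersetCard_card_inter α hjm, card_compl, hαcard, Fintype.card_fin] at this
  have hridge := card_facesMeeting_mul_two (by norm_num) hM α
  have hsphere : ∀ γ ∈ α.powersetCard 4, eulerChar (lk M γ) = 2 := fun γ hγ => by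
    obtain ⟨hγα, hγ⟩ := mem_powersetCard.1 hγ
    exact (hlink γ (hK.2 α hα γ hγα (card_pos.1 (by omega))) hγ).2.2
  have heuler : ∑ γ ∈ α.powersetCard 4, eulerChar (lk M γ) = 70 := by
    simp [sum_congr rfl hsphere, hαcard, Nat.choose]
  rw [sum_eulerChar_lk_powersetCard hK (r := 4) (s := 3) hM.2.1.1 α] at heuler
  have f55 := hself 5; have f66 := hself 6; have f77 := hself 7
  have p55 := hpair 5 5; have p54 := hpair 5 4; have p65 := hpair 6 5; have p63 := hpair 6 3
  have r2 := hridge 2; have r3 := hridge 3; have r4 := hridge 4; have r5 := hridge 5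
  have r6 := hridge 6
  norm_num [sum_range_succ, hαcard, Nat.choose, facesMeeting_eq_empty_of_lt] at heuler
  norm_num [Nat.choose] at f55 f66 f77 p55 p54 p65 p63 r2 r3 r4 r5 r6
  omega

/-- Lemma 4.11: in a 12-vertex 6-dimensional weak pseudomanifold with
complementarity (whose 4-element faces have 2-sphere links), for any fixed facet `α`
the numbers of facets meeting `α` in exactly 3, 4, 5 and 6 vertices are 36, 58, 30
and 7 respectively. -/
theorem stmt_16 (M : Finset (Finset (Fin 12))) (hM : IsWPM 6 M)
    (hvert : ∀ v : Fin 12, ({v} : Finset (Fin 12)) ∈ M)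
    (hcomp : Complementarity M)
    (hlink : ∀ γ ∈ M, γ.card = 4 → Is2Sphere (lk M γ))
    (α : Finset (Fin 12)) (hα : α ∈ M) (hαcard : α.card = 7) :
    (M.filter fun β => β.card = 7 ∧ (α ∩ β).card = 3).card = 36 ∧
    (M.filter fun β => β.card = 7 ∧ (α ∩ β).card = 4).card = 58 ∧
    (M.filter fun β => β.card = 7 ∧ (α ∩ β).card = 5).card = 30 ∧
    (M.filter fun β => β.card = 7 ∧ (α ∩ β).card = 6).card = 7 :=
  stmt_16_general M hM hcomp hlink α hα hαcard
end
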